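/- arXiv:1312.4483 — 3 statements merged into one kernel-verified Lean document; each statement's English description precedes it below -/
import Mathlib

section
/- Let Q, P₊, P₋ ∈ ℒ(ℋ) with P₊ + P₋ = I, Q self-adjoint with 0 ≤ Q ≤ I and Q injective. Let l ∈ ℕ*, R₁,…,R_l ∈ ℒ(ℋ), σ ∈ (0,1], N > σ and c₁,…,c_l > 0, and assume for each j ∈ {1,…,l}: (a₁) ‖Q^σ R_j Q^σ‖ ≤ c_j; (b₁) ‖Q^{1−δ} P₋ R_j Q^δ‖ ≤ c_j for all δ ∈ [σ, N); (c₁) ‖Q^δ R_j P₊ Q^{1−δ}‖ ≤ c_j for all δ ∈ [σ, N); (d₁) ‖Q^{−δ₁} P₋ R_j P₊ Q^{−δ₂}‖ ≤ c_j for all δ₁, δ₂ ≥ 0 with δ₁ + δ₂ < N − 1. Then for every integer n ≥ 1 with n < N + 1 − σ and all j₁,…,j_n ∈ {1,…,l}: (a_n) ‖Q^{n−1+σ} R_{j₁}⋯R_{j_n} Q^{n−1+σ}‖ ≤ 2^{n−1} c_{j₁}⋯c_{j_n}; (b_n) ‖Q^{n−δ} P₋ R_{j₁}⋯R_{j_n}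 Q^δ‖ ≤ 2^{n−1} c_{j₁}⋯c_{j_n} for all δ ∈ [n−1+σ, N); (c_n) ‖Q^δ R_{j₁}⋯R_{j_n} P₊ Q^{n−δ}‖ ≤ 2^{n−1} c_{j₁}⋯c_{j_n} for all δ ∈ [n−1+σ, N); (d_n) ‖Q^{−δ₁} P₋ R_{j₁}⋯R_{j_n} P₊ Q^{−δ₂}‖ ≤ 2^{n−1} c_{j₁}⋯c_{j_n} for all δ₁, δ₂ ≥ 0 with δ₁ + δ₂ < N − n. -/
open scoped InnerProductSpace

noncomputable section

/-- The meaning of `‖Q^{β₁} T Q^{β₂}‖ ≤ c` for real (possibly negative) exponents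
`β₁, β₂`, where `Qpow s` denotes the power `Q^s` (for `s ≥ 0`) of a fixed nonnegative
self-adjoint contraction `Q`: there exists `S ∈ ℒ(𝒦)` with `‖S‖ ≤ c` such that
`Q^{max(-β₁,0)} S Q^{max(-β₂,0)} = Q^{max(β₁,0)} T Q^{max(β₂,0)}`. -/
def NBound {𝒦 : Type*} [NormedAddCommGroup 𝒦] [InnerProductSpace ℂ 𝒦]
    (Qpow : ℝ → (𝒦 →L[ℂ] 𝒦)) (β₁ β₂ : ℝ) (T : 𝒦 →L[ℂ] 𝒦) (c : ℝ) : Prop :=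
  ∃ S : 𝒦 →L[ℂ] 𝒦, ‖S‖ ≤ c ∧
    Qpow (max (-β₁) 0) ∘L S ∘L Qpow (max (-β₂) 0) =
      Qpow (max β₁ 0) ∘L T ∘L Qpow (max β₂ 0)

section Aux

variable {𝒦 : Type*} [NormedAddCommGroup 𝒦] [InnerProductSpace ℂ 𝒦]
variable {Qpow : ℝ → (𝒦 →L[ℂ] 𝒦)}

theorem nbound_iff {β₁ β₂ : ℝ} {T : 𝒦 →L[ℂ] 𝒦} {c : ℝ} :
    NBound Qpow β₁ β₂ T c ↔ ∃ S : 𝒦 →L[ℂ] 𝒦, ‖S‖ ≤ c ∧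
      Qpow (max (-β₁) 0) * (S * Qpow (max (-β₂) 0)) =
        Qpow (max β₁ 0) * (T * Qpow (max β₂ 0)) := Iff.rfl

theorem qmul (hQadd : ∀ s t : ℝ, 0 ≤ s → 0 ≤ t → Qpow (s + t) = Qpow s ∘L Qpow t)
    {s t : ℝ} (hs : 0 ≤ s) (ht : 0 ≤ t) :
    Qpow s * Qpow t = Qpow (s + t) := (hQadd s t hs ht).symm

theorem norm_q_mul (hQnorm : ∀ s : ℝ, 0 ≤ s → ‖Qpow s‖ ≤ 1)
    {e : ℝ} (he : 0 ≤ e) {S : 𝒦 →L[ℂ] 𝒦} {x : ℝ} (hS : ‖S‖ ≤ x) :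
    ‖Qpow e * S‖ ≤ x :=
  (norm_mul_le _ _).trans ((mul_le_of_le_one_left (norm_nonneg S) (hQnorm e he)).trans hS)

theorem norm_mul_q (hQnorm : ∀ s : ℝ, 0 ≤ s → ‖Qpow s‖ ≤ 1)
    {e : ℝ} (he : 0 ≤ e) {S : 𝒦 →L[ℂ] 𝒦} {x : ℝ} (hS : ‖S‖ ≤ x) :
    ‖S * Qpow e‖ ≤ x :=
  (norm_mul_le _ _).trans ((mul_le_of_le_one_right (norm_nonneg S) (hQnorm e he)).trans hS)

theorem norm_bound3 (hQnorm : ∀ s : ℝ, 0 ≤ s → ‖Qpow s‖ ≤ 1)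
    {S S' : 𝒦 →L[ℂ] 𝒦} {e x y : ℝ} (he : 0 ≤ e) (hx : 0 ≤ x)
    (hS : ‖S‖ ≤ x) (hS' : ‖S'‖ ≤ y) :
    ‖S * Qpow e * S'‖ ≤ x * y :=
  (norm_mul_le _ _).trans (mul_le_mul (norm_mul_q hQnorm he hS) hS' (norm_nonneg _) hx)

theorem NBound_congr {β₁ β₂ β₁' β₂' c c' : ℝ} {T T' : 𝒦 →L[ℂ] 𝒦}
    (h₁ : β₁ = β₁') (h₂ : β₂ = β₂') (hT : T = T') (hc : c = c')
    (h : NBound Qpow β₁ β₂ T c) : NBound Qpow β₁' β₂' T' c' := by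
  subst h₁; subst h₂; subst hT; subst hc; exact h

theorem NBound_le {β₁ β₂ c c' : ℝ} {T : 𝒦 →L[ℂ] 𝒦} (hcc : c ≤ c')
    (h : NBound Qpow β₁ β₂ T c) : NBound Qpow β₁ β₂ T c' := by
  obtain ⟨S, hS, hE⟩ := h; exact ⟨S, hS.trans hcc, hE⟩

theorem NBound_add {β₁ β₂ c c' : ℝ} {T T' : 𝒦 →L[ℂ] 𝒦}
    (h : NBound Qpow β₁ β₂ T c) (h' : NBound Qpow β₁ β₂ T' c') :
    NBound Qpow β₁ β₂ (T + T') (c + c') := by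
  obtain ⟨S, hS, hE⟩ := nbound_iff.1 h
  obtain ⟨S', hS', hE'⟩ := nbound_iff.1 h'
  refine nbound_iff.2 ⟨S + S', (norm_add_le _ _).trans (add_le_add hS hS'), ?_⟩
  simp only [add_mul, mul_add]
  rw [hE, hE']

theorem NBound_mono_left
    (hQadd : ∀ s t : ℝ, 0 ≤ s → 0 ≤ t → Qpow (s + t) = Qpow s ∘L Qpow t)
    (hQnorm : ∀ s : ℝ, 0 ≤ s → ‖Qpow s‖ ≤ 1)
    {β₁ β₁' β₂ c : ℝ} {T : 𝒦 →L[ℂ] 𝒦} (hβ : β₁ ≤ β₁') (hc : 0 ≤ c)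
    (h : NBound Qpow β₁ β₂ T c) : NBound Qpow β₁' β₂ T c := by
  obtain ⟨S, hS, hE⟩ := nbound_iff.1 h
  have he₁0 : 0 ≤ max β₁' 0 - max β₁ 0 := sub_nonneg.2 (max_le_max hβ le_rfl)
  have he₂0 : 0 ≤ max (-β₁) 0 - max (-β₁') 0 :=
    sub_nonneg.2 (max_le_max (neg_le_neg hβ) le_rfl)
  set e₁ := max β₁' 0 - max β₁ 0 with he₁
  set e₂ := max (-β₁) 0 - max (-β₁') 0 with he₂
  refine nbound_iff.2 ⟨Qpow (e₁ + e₂) * S, norm_q_mul hQnorm (by linarith) hS, ?_⟩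
  calc Qpow (max (-β₁') 0) * (Qpow (e₁ + e₂) * S * Qpow (max (-β₂) 0))
      = Qpow (max (-β₁') 0) * Qpow (e₁ + e₂) * (S * Qpow (max (-β₂) 0)) := by
        simp only [mul_assoc]
    _ = Qpow (e₁ + max (-β₁) 0) * (S * Qpow (max (-β₂) 0)) := by
        rw [qmul hQadd (le_max_right _ _) (by linarith),
          show max (-β₁') 0 + (e₁ + e₂) = e₁ + max (-β₁) 0 by rw [he₁, he₂]; ring]
    _ = Qpow e₁ * (Qpow (max (-β₁) 0) * (S * Qpow (max (-β₂) 0))) := by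
        rw [show Qpow (e₁ + max (-β₁) 0) = Qpow e₁ * Qpow (max (-β₁) 0) from
          (qmul hQadd he₁0 (le_max_right _ _)).symm]
        simp only [mul_assoc]
    _ = Qpow e₁ * (Qpow (max β₁ 0) * (T * Qpow (max β₂ 0))) := by rw [hE]
    _ = Qpow (e₁ + max β₁ 0) * (T * Qpow (max β₂ 0)) := by
        rw [show Qpow (e₁ + max β₁ 0) = Qpow e₁ * Qpow (max β₁ 0) from
          (qmul hQadd he₁0 (le_max_right _ _)).symm]
        simp only [mul_assoc]
    _ = Qpow (max β₁' 0) * (T * Qpow (max β₂ 0)) := by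
        rw [show e₁ + max β₁ 0 = max β₁' 0 by rw [he₁]; ring]

theorem NBound_mono_right
    (hQadd : ∀ s t : ℝ, 0 ≤ s → 0 ≤ t → Qpow (s + t) = Qpow s ∘L Qpow t)
    (hQnorm : ∀ s : ℝ, 0 ≤ s → ‖Qpow s‖ ≤ 1)
    {β₁ β₂ β₂' c : ℝ} {T : 𝒦 →L[ℂ] 𝒦} (hβ : β₂ ≤ β₂') (hc : 0 ≤ c)
    (h : NBound Qpow β₁ β₂ T c) : NBound Qpow β₁ β₂' T c := by
  obtain ⟨S, hS, hE⟩ := nbound_iff.1 h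
  have he₁0 : 0 ≤ max β₂' 0 - max β₂ 0 := sub_nonneg.2 (max_le_max hβ le_rfl)
  have he₂0 : 0 ≤ max (-β₂) 0 - max (-β₂') 0 :=
    sub_nonneg.2 (max_le_max (neg_le_neg hβ) le_rfl)
  set e₁ := max β₂' 0 - max β₂ 0 with he₁
  set e₂ := max (-β₂) 0 - max (-β₂') 0 with he₂
  refine nbound_iff.2 ⟨S * Qpow (e₂ + e₁), norm_mul_q hQnorm (by linarith) hS, ?_⟩
  calc Qpow (max (-β₁) 0) * (S * Qpow (e₂ + e₁) * Qpow (max (-β₂') 0))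
      = Qpow (max (-β₁) 0) * (S * (Qpow (e₂ + e₁) * Qpow (max (-β₂') 0))) := by
        simp only [mul_assoc]
    _ = Qpow (max (-β₁) 0) * (S * Qpow (max (-β₂) 0 + e₁)) := by
        rw [qmul hQadd (by linarith) (le_max_right _ _),
          show e₂ + e₁ + max (-β₂') 0 = max (-β₂) 0 + e₁ by rw [he₁, he₂]; ring]
    _ = Qpow (max (-β₁) 0) * (S * Qpow (max (-β₂) 0)) * Qpow e₁ := by
        rw [show Qpow (max (-β₂) 0 + e₁) = Qpow (max (-β₂) 0) * Qpow e₁ from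
          (qmul hQadd (le_max_right _ _) he₁0).symm]
        simp only [mul_assoc]
    _ = Qpow (max β₁ 0) * (T * Qpow (max β₂ 0)) * Qpow e₁ := by rw [hE]
    _ = Qpow (max β₁ 0) * (T * Qpow (max β₂' 0)) := by
        rw [show max β₂' 0 = max β₂ 0 + e₁ by rw [he₁]; ring,
          show Qpow (max β₂ 0 + e₁) = Qpow (max β₂ 0) * Qpow e₁ from
            (qmul hQadd (le_max_right _ _) he₁0).symm]
        simp only [mul_assoc]

theorem NBound_glueI
    (hQ0 : Qpow 0 = 1)
    (hQadd : ∀ s t : ℝ, 0 ≤ s → 0 ≤ t → Qpow (s + t) = Qpow s ∘L Qpow t)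
    (hQnorm : ∀ s : ℝ, 0 ≤ s → ‖Qpow s‖ ≤ 1)
    {β₁ β₂ a b c c' : ℝ} {T T' : 𝒦 →L[ℂ] 𝒦}
    (hb : 0 ≤ b) (hba : b ≤ a) (hc : 0 ≤ c)
    (h : NBound Qpow β₁ (-a) T c) (h' : NBound Qpow b β₂ T' c') :
    NBound Qpow β₁ β₂ (T * T') (c * c') := by
  have ha : 0 ≤ a := hb.trans hba
  obtain ⟨S, hS, hE⟩ := nbound_iff.1 h
  obtain ⟨S', hS', hE'⟩ := nbound_iff.1 h'
  rw [show max (- -a) 0 = a by rw [neg_neg]; exact max_eq_left ha,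
      show max (-a) 0 = 0 from max_eq_right (neg_nonpos.2 ha), hQ0, mul_one] at hE
  -- hE : Qpow (max (-β₁) 0) * (S * Qpow a) = Qpow (max β₁ 0) * T
  rw [show max (-b) 0 = 0 from max_eq_right (neg_nonpos.2 hb), hQ0, one_mul,
      show max b 0 = b from max_eq_left hb] at hE'
  -- hE' : S' * Qpow (max (-β₂) 0) = Qpow b * (T' * Qpow (max β₂ 0))
  refine nbound_iff.2 ⟨S * Qpow (a - b) * S', norm_bound3 hQnorm (by linarith) hc hS hS', ?_⟩
  calc Qpow (max (-β₁) 0) * (S * Qpow (a - b) * S' * Qpow (max (-β₂) 0))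
      = Qpow (max (-β₁) 0) * (S * (Qpow (a - b) * (S' * Qpow (max (-β₂) 0)))) := by
        simp only [mul_assoc]
    _ = Qpow (max (-β₁) 0) * (S * ((Qpow (a - b) * Qpow b) * (T' * Qpow (max β₂ 0)))) := by
        rw [hE']; simp only [mul_assoc]
    _ = Qpow (max (-β₁) 0) * (S * Qpow a) * (T' * Qpow (max β₂ 0)) := by
        rw [qmul hQadd (by linarith) hb, show a - b + b = a by ring]
        simp only [mul_assoc]
    _ = Qpow (max β₁ 0) * T * (T' * Qpow (max β₂ 0)) := by rw [hE]
    _ = Qpow (max β₁ 0) * (T * T' * Qpow (max β₂ 0)) := by simp only [mul_assoc]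

theorem NBound_glueII
    (hQ0 : Qpow 0 = 1)
    (hQadd : ∀ s t : ℝ, 0 ≤ s → 0 ≤ t → Qpow (s + t) = Qpow s ∘L Qpow t)
    (hQnorm : ∀ s : ℝ, 0 ≤ s → ‖Qpow s‖ ≤ 1)
    {β₁ β₂ a b c c' : ℝ} {T T' : 𝒦 →L[ℂ] 𝒦}
    (hb : 0 ≤ b) (hba : b ≤ a) (hc : 0 ≤ c)
    (h : NBound Qpow β₁ b T c) (h' : NBound Qpow (-a) β₂ T' c') :
    NBound Qpow β₁ β₂ (T * T') (c * c') := by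
  have ha : 0 ≤ a := hb.trans hba
  obtain ⟨S, hS, hE⟩ := nbound_iff.1 h
  obtain ⟨S', hS', hE'⟩ := nbound_iff.1 h'
  rw [show max (-b) 0 = 0 from max_eq_right (neg_nonpos.2 hb), hQ0, mul_one,
      show max b 0 = b from max_eq_left hb] at hE
  -- hE : Qpow (max (-β₁) 0) * S = Qpow (max β₁ 0) * (T * Qpow b)
  rw [show max (- -a) 0 = a by rw [neg_neg]; exact max_eq_left ha,
      show max (-a) 0 = 0 from max_eq_right (neg_nonpos.2 ha), hQ0, one_mul] at hE'
  -- hE' : Qpow a * (S' * Qpow (max (-β₂) 0)) = T' * Qpow (max β₂ 0)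
  refine nbound_iff.2 ⟨S * Qpow (a - b) * S', norm_bound3 hQnorm (by linarith) hc hS hS', ?_⟩
  calc Qpow (max (-β₁) 0) * (S * Qpow (a - b) * S' * Qpow (max (-β₂) 0))
      = Qpow (max (-β₁) 0) * S * (Qpow (a - b) * (S' * Qpow (max (-β₂) 0))) := by
        simp only [mul_assoc]
    _ = Qpow (max β₁ 0) * (T * ((Qpow b * Qpow (a - b)) * (S' * Qpow (max (-β₂) 0)))) := by
        rw [hE]; simp only [mul_assoc]
    _ = Qpow (max β₁ 0) * (T * (Qpow a * (S' * Qpow (max (-β₂) 0)))) := by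
        rw [qmul hQadd hb (by linarith), show b + (a - b) = a by ring]
    _ = Qpow (max β₁ 0) * (T * (T' * Qpow (max β₂ 0))) := by rw [hE']
    _ = Qpow (max β₁ 0) * (T * T' * Qpow (max β₂ 0)) := by simp only [mul_assoc]



theorem NBound_step
    (hQ0 : Qpow 0 = 1)
    (hQadd : ∀ s t : ℝ, 0 ≤ s → 0 ≤ t → Qpow (s + t) = Qpow s ∘L Qpow t)
    (hQnorm : ∀ s : ℝ, 0 ≤ s → ‖Qpow s‖ ≤ 1)
    (Pplus Pminus : 𝒦 →L[ℂ] 𝒦) (hP : Pplus + Pminus = 1)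
    (σ N : ℝ) (hσ0 : 0 < σ) (hσ1 : σ ≤ 1)
    (A B : 𝒦 →L[ℂ] 𝒦) (C cB : ℝ) (hC : 0 ≤ C) (hcB : 0 ≤ cB)
    (n : ℕ) (hn : 1 ≤ n) (hlt : (n : ℝ) + σ < N)
    (IHa : NBound Qpow ((n : ℝ) - 1 + σ) ((n : ℝ) - 1 + σ) A C)
    (IHb : ∀ δ : ℝ, (n : ℝ) - 1 + σ ≤ δ → δ < N → NBound Qpow ((n : ℝ) - δ) δ (Pminus * A) C)
    (IHc : ∀ δ : ℝ, (n : ℝ) - 1 + σ ≤ δ → δ < N → NBound Qpow δ ((n : ℝ) - δ) (A * Pplus) C)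
    (IHd : ∀ δ₁ δ₂ : ℝ, 0 ≤ δ₁ → 0 ≤ δ₂ → δ₁ + δ₂ < N - (n : ℝ) →
      NBound Qpow (-δ₁) (-δ₂) (Pminus * (A * Pplus)) C)
    (hBa : NBound Qpow σ σ B cB)
    (hBb : ∀ δ : ℝ, σ ≤ δ → δ < N → NBound Qpow (1 - δ) δ (Pminus * B) cB)
    (hBc : ∀ δ : ℝ, σ ≤ δ → δ < N → NBound Qpow δ (1 - δ) (B * Pplus) cB)
    (hBd : ∀ δ₁ δ₂ : ℝ, 0 ≤ δ₁ → 0 ≤ δ₂ → δ₁ + δ₂ < N - 1 →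
      NBound Qpow (-δ₁) (-δ₂) (Pminus * (B * Pplus)) cB) :
    NBound Qpow ((n : ℝ) + σ) ((n : ℝ) + σ) (A * B) (2 * (C * cB)) ∧
    (∀ δ : ℝ, (n : ℝ) + σ ≤ δ → δ < N →
      NBound Qpow ((n : ℝ) + 1 - δ) δ (Pminus * (A * B)) (2 * (C * cB)) ∧
      NBound Qpow δ ((n : ℝ) + 1 - δ) ((A * B) * Pplus) (2 * (C * cB))) ∧
    (∀ δ₁ δ₂ : ℝ, 0 ≤ δ₁ → 0 ≤ δ₂ → δ₁ + δ₂ < N - ((n : ℝ) + 1) →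
      NBound Qpow (-δ₁) (-δ₂) (Pminus * ((A * B) * Pplus)) (2 * (C * cB))) := by
  have hn1 : (1 : ℝ) ≤ (n : ℝ) := by exact_mod_cast hn
  have hsplit : ∀ X Y : 𝒦 →L[ℂ] 𝒦, X * Y = X * Pplus * Y + X * (Pminus * Y) := by
    intro X Y
    have h2 : X * Pplus * Y + X * (Pminus * Y) = X * ((Pplus + Pminus) * Y) := by
      rw [add_mul, mul_add, mul_assoc]
    rw [h2, hP, one_mul]
  have h2CC : 2 * (C * cB) = C * cB + C * cB := by ring
  refine ⟨?_, fun δ hδ1 hδ2 => ⟨?_, ?_⟩, fun δ₁ δ₂ hδ₁ hδ₂ hδs => ?_⟩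
  -- (a)
  · have t1 : NBound Qpow ((n : ℝ) + σ) ((n : ℝ) + σ) (A * Pplus * B) (C * cB) := by
      have h1 : NBound Qpow ((n : ℝ) + σ) (-σ) (A * Pplus) C :=
        NBound_congr rfl (by ring) rfl rfl (IHc ((n : ℝ) + σ) (by linarith) hlt)
      exact NBound_mono_right hQadd hQnorm (by linarith) (by positivity)
        (NBound_glueI hQ0 hQadd hQnorm hσ0.le le_rfl hC h1 hBa)
    have t2 : NBound Qpow ((n : ℝ) + σ) ((n : ℝ) + σ) (A * (Pminus * B)) (C * cB) := by
      have h1 : NBound Qpow (-((n : ℝ) - 1 + σ)) ((n : ℝ) + σ) (Pminus * B) cB :=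
        NBound_congr (by ring) rfl rfl rfl (hBb ((n : ℝ) + σ) (by linarith) hlt)
      exact NBound_mono_left hQadd hQnorm (by linarith) (by positivity)
        (NBound_glueII hQ0 hQadd hQnorm (by linarith) le_rfl hC IHa h1)
    exact NBound_congr rfl rfl (hsplit A B).symm h2CC.symm (NBound_add t1 t2)
  -- (b)
  · have t1 : NBound Qpow ((n : ℝ) + 1 - δ) δ (Pminus * (A * Pplus) * B) (C * cB) := by
      have hd1' : NBound Qpow (-(max (δ - ((n : ℝ) + 1)) 0)) (-σ)
          (Pminus * (A * Pplus)) C :=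
        IHd _ σ (le_max_right _ _) hσ0.le
          (by
            have h1 : max (δ - ((n : ℝ) + 1)) 0 < N - (n : ℝ) - σ :=
              max_lt (by linarith) (by linarith)
            linarith)
      have g : NBound Qpow (-(max (δ - ((n : ℝ) + 1)) 0)) σ
          (Pminus * (A * Pplus) * B) (C * cB) :=
        NBound_glueI hQ0 hQadd hQnorm hσ0.le le_rfl hC hd1' hBa
      have g2 : NBound Qpow ((n : ℝ) + 1 - δ) σ (Pminus * (A * Pplus) * B) (C * cB) :=
        NBound_mono_left hQadd hQnorm
          (by have := le_max_left (δ - ((n : ℝ) + 1)) 0; linarith) (by positivity) g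
      exact NBound_mono_right hQadd hQnorm (by linarith) (by positivity) g2
    have t2 : NBound Qpow ((n : ℝ) + 1 - δ) δ ((Pminus * A) * (Pminus * B)) (C * cB) := by
      have h1 : NBound Qpow ((n : ℝ) - (δ - 1)) (δ - 1) (Pminus * A) C :=
        IHb (δ - 1) (by linarith) (by linarith)
      have h2 : NBound Qpow (-(δ - 1)) δ (Pminus * B) cB :=
        NBound_congr (by ring) rfl rfl rfl (hBb δ (by linarith) hδ2)
      exact NBound_congr (by ring) rfl rfl rfl
        (NBound_glueII hQ0 hQadd hQnorm (by linarith) le_rfl hC h1 h2)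
    have key : Pminus * (A * B) = Pminus * (A * Pplus) * B + (Pminus * A) * (Pminus * B) := by
      rw [← mul_assoc Pminus A B, hsplit (Pminus * A) B, ← mul_assoc Pminus A Pplus]
    exact NBound_congr rfl rfl key.symm h2CC.symm (NBound_add t1 t2)
  -- (c)
  · have t1 : NBound Qpow δ ((n : ℝ) + 1 - δ) ((A * Pplus) * (B * Pplus)) (C * cB) := by
      have h1 : NBound Qpow δ (-(δ - (n : ℝ))) (A * Pplus) C :=
        NBound_congr rfl (by ring) rfl rfl (IHc δ (by linarith) hδ2)
      have h2 : NBound Qpow (δ - (n : ℝ)) (1 - (δ - (n : ℝ))) (B * Pplus) cB :=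
        hBc (δ - (n : ℝ)) (by linarith) (by linarith)
      exact NBound_congr rfl (by ring) rfl rfl
        (NBound_glueI hQ0 hQadd hQnorm (by linarith) le_rfl hC h1 h2)
    have t2 : NBound Qpow δ ((n : ℝ) + 1 - δ) (A * (Pminus * (B * Pplus))) (C * cB) := by
      have h2 : NBound Qpow (-((n : ℝ) - 1 + σ)) (-(max (δ - ((n : ℝ) + 1)) 0))
          (Pminus * (B * Pplus)) cB :=
        hBd ((n : ℝ) - 1 + σ) _ (by linarith) (le_max_right _ _)
          (by
            have h1 : max (δ - ((n : ℝ) + 1)) 0 < N - (n : ℝ) - σ :=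
              max_lt (by linarith) (by linarith)
            linarith)
      have g : NBound Qpow ((n : ℝ) - 1 + σ) (-(max (δ - ((n : ℝ) + 1)) 0))
          (A * (Pminus * (B * Pplus))) (C * cB) :=
        NBound_glueII hQ0 hQadd hQnorm (by linarith) le_rfl hC IHa h2
      have g2 : NBound Qpow ((n : ℝ) - 1 + σ) ((n : ℝ) + 1 - δ)
          (A * (Pminus * (B * Pplus))) (C * cB) :=
        NBound_mono_right hQadd hQnorm
          (by have := le_max_left (δ - ((n : ℝ) + 1)) 0; linarith) (by positivity) g
      exact NBound_mono_left hQadd hQnorm (by linarith) (by positivity) g2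
    have key : (A * B) * Pplus = (A * Pplus) * (B * Pplus) + A * (Pminus * (B * Pplus)) := by
      rw [mul_assoc A B Pplus, hsplit A (B * Pplus)]
    exact NBound_congr rfl rfl key.symm h2CC.symm (NBound_add t1 t2)
  -- (d)
  · have t1 : NBound Qpow (-δ₁) (-δ₂) ((Pminus * (A * Pplus)) * (B * Pplus)) (C * cB) := by
      have h1 : NBound Qpow (-δ₁) (-(1 + δ₂)) (Pminus * (A * Pplus)) C :=
        IHd δ₁ (1 + δ₂) hδ₁ (by linarith) (by linarith)
      have h2 : NBound Qpow (1 + δ₂) (1 - (1 + δ₂)) (B * Pplus) cB :=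
        hBc (1 + δ₂) (by linarith) (by linarith)
      exact NBound_congr rfl (by ring) rfl rfl
        (NBound_glueI hQ0 hQadd hQnorm (by linarith) le_rfl hC h1 h2)
    have t2 : NBound Qpow (-δ₁) (-δ₂) ((Pminus * A) * (Pminus * (B * Pplus))) (C * cB) := by
      have h1 : NBound Qpow ((n : ℝ) - ((n : ℝ) + δ₁)) ((n : ℝ) + δ₁) (Pminus * A) C :=
        IHb ((n : ℝ) + δ₁) (by linarith) (by linarith)
      have h2 : NBound Qpow (-((n : ℝ) + δ₁)) (-δ₂) (Pminus * (B * Pplus)) cB :=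
        hBd ((n : ℝ) + δ₁) δ₂ (by linarith) hδ₂ (by linarith)
      exact NBound_congr (by ring) rfl rfl rfl
        (NBound_glueII hQ0 hQadd hQnorm (by linarith) le_rfl hC h1 h2)
    have key : Pminus * ((A * B) * Pplus)
        = (Pminus * (A * Pplus)) * (B * Pplus) + (Pminus * A) * (Pminus * (B * Pplus)) := by
      rw [mul_assoc A B Pplus, ← mul_assoc Pminus A (B * Pplus),
        hsplit (Pminus * A) (B * Pplus), ← mul_assoc Pminus A Pplus]
    exact NBound_congr rfl rfl key.symm h2CC.symm (NBound_add t1 t2)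



end Aux

/-- **The inductive weighted-norm lemma** (Lemma 5.5, after Jensen).
`Qpow` is the family of nonnegative powers of a self-adjoint operator `Q = Qpow 1` with
`0 ≤ Q ≤ I` and `Q` injective (the characterizing properties of the powers are listed as
hypotheses).  Let `Pplus + Pminus = I`, let `R₁, …, R_l ∈ ℒ(𝒦)`, `σ ∈ (0,1]`, `N > σ` and
`c_j > 0` satisfy the hypotheses `(a₁)`–`(d₁)`.  Then for every `n ≥ 1` with
`n < N + 1 - σ` and all indices `j₁, …, j_n`, the conclusions `(a_n)`–`(d_n)` hold with
constant `2^{n-1} c_{j₁} ⋯ c_{j_n}`. -/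
theorem weighted_resolvent_product_lemma
    {𝒦 : Type*} [NormedAddCommGroup 𝒦] [InnerProductSpace ℂ 𝒦] [CompleteSpace 𝒦]
    (Qpow : ℝ → (𝒦 →L[ℂ] 𝒦))
    (hQ0 : Qpow 0 = 1)
    (hQadd : ∀ s t : ℝ, 0 ≤ s → 0 ≤ t → Qpow (s + t) = Qpow s ∘L Qpow t)
    (hQsa : ∀ s : ℝ, 0 ≤ s → IsSelfAdjoint (Qpow s))
    (hQpos : ∀ s : ℝ, 0 ≤ s → ∀ x : 𝒦, 0 ≤ (inner ℂ (Qpow s x) x : ℂ).re)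
    (hQnorm : ∀ s : ℝ, 0 ≤ s → ‖Qpow s‖ ≤ 1)
    (hQcont : ∀ x : 𝒦, ContinuousOn (fun s => Qpow s x) (Set.Ici (0 : ℝ)))
    (hQinj : Function.Injective (Qpow 1))
    (Pplus Pminus : 𝒦 →L[ℂ] 𝒦) (hP : Pplus + Pminus = 1)
    (l : ℕ) (hl : 1 ≤ l) (R : Fin l → (𝒦 →L[ℂ] 𝒦)) (c : Fin l → ℝ)
    (hc : ∀ j, 0 < c j)
    (σ N : ℝ) (hσ0 : 0 < σ) (hσ1 : σ ≤ 1) (hN : σ < N)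
    (ha1 : ∀ j, NBound Qpow σ σ (R j) (c j))
    (hb1 : ∀ j, ∀ δ : ℝ, σ ≤ δ → δ < N → NBound Qpow (1 - δ) δ (Pminus ∘L R j) (c j))
    (hc1 : ∀ j, ∀ δ : ℝ, σ ≤ δ → δ < N → NBound Qpow δ (1 - δ) (R j ∘L Pplus) (c j))
    (hd1 : ∀ j, ∀ δ₁ δ₂ : ℝ, 0 ≤ δ₁ → 0 ≤ δ₂ → δ₁ + δ₂ < N - 1 →
      NBound Qpow (-δ₁) (-δ₂) (Pminus ∘L R j ∘L Pplus) (c j)) :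
    ∀ n : ℕ, 1 ≤ n → (n : ℝ) < N + 1 - σ → ∀ j : Fin n → Fin l,
      NBound Qpow ((n : ℝ) - 1 + σ) ((n : ℝ) - 1 + σ)
          (List.prod (List.ofFn fun i => R (j i)))
          ((2 : ℝ) ^ (n - 1) * ∏ i, c (j i)) ∧
      (∀ δ : ℝ, (n : ℝ) - 1 + σ ≤ δ → δ < N →
        NBound Qpow ((n : ℝ) - δ) δ (Pminus ∘L List.prod (List.ofFn fun i => R (j i)))
            ((2 : ℝ) ^ (n - 1) * ∏ i, c (j i)) ∧
        NBound Qpow δ ((n : ℝ) - δ) (List.prod (List.ofFn fun i => R (j i)) ∘L Pplus)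
            ((2 : ℝ) ^ (n - 1) * ∏ i, c (j i))) ∧
      (∀ δ₁ δ₂ : ℝ, 0 ≤ δ₁ → 0 ≤ δ₂ → δ₁ + δ₂ < N - (n : ℝ) →
        NBound Qpow (-δ₁) (-δ₂)
            (Pminus ∘L List.prod (List.ofFn fun i => R (j i)) ∘L Pplus)
            ((2 : ℝ) ^ (n - 1) * ∏ i, c (j i))) := by
  intro n
  induction n with
  | zero => intro h; exact absurd h (by norm_num)
  | succ n ih =>
    intro _ hlt j
    have hpr : (List.ofFn fun i : Fin (n + 1) => R (j i)).prod
        = (List.ofFn fun i : Fin n => R (j i.castSucc)).prod * R (j (Fin.last n)) := by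
      rw [List.ofFn_succ', List.prod_concat]
    rcases Nat.eq_zero_or_pos n with rfl | hn
    · -- base case n = 1
      have hpr1 : (List.ofFn fun i : Fin (0 + 1) => R (j i)).prod = R (j 0) := by
        simp [List.ofFn_succ]
      have hcst : c (j 0) = (2 : ℝ) ^ (0 + 1 - 1) * ∏ i : Fin (0 + 1), c (j i) := by
        simp
      refine ⟨?_, fun δ h1 h2 => ⟨?_, ?_⟩, fun δ₁ δ₂ h1 h2 h3 => ?_⟩
      · exact NBound_congr (by push_cast; ring) (by push_cast; ring)
          hpr1.symm hcst (ha1 (j 0))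
      · refine NBound_congr (by push_cast; ring) rfl (by rw [hpr1]) hcst
          (hb1 (j 0) δ ?_ h2)
        push_cast at h1; linarith
      · refine NBound_congr rfl (by push_cast; ring) (by rw [hpr1]) hcst
          (hc1 (j 0) δ ?_ h2)
        push_cast at h1; linarith
      · refine NBound_congr rfl rfl (by rw [hpr1]) hcst
          (hd1 (j 0) δ₁ δ₂ h1 h2 ?_)
        push_cast at h3; linarith
    · -- inductive step
      obtain ⟨iha, ihbc, ihd⟩ := ih hn (by push_cast at hlt ⊢; linarith)
        (fun i => j i.castSucc)
      have hCpos : (0 : ℝ) ≤ (2 : ℝ) ^ (n - 1) * ∏ i : Fin n, c (j i.castSucc) :=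
        mul_nonneg (by positivity) (Finset.prod_nonneg fun i _ => (hc _).le)
      have step := NBound_step hQ0 hQadd hQnorm Pplus Pminus hP σ N hσ0 hσ1
        ((List.ofFn fun i : Fin n => R (j i.castSucc)).prod) (R (j (Fin.last n)))
        ((2 : ℝ) ^ (n - 1) * ∏ i : Fin n, c (j i.castSucc)) (c (j (Fin.last n)))
        hCpos (hc _).le n hn (by push_cast at hlt; linarith)
        iha (fun δ u1 u2 => (ihbc δ u1 u2).1) (fun δ u1 u2 => (ihbc δ u1 u2).2) ihd
        (ha1 _) (hb1 _) (hc1 _) (hd1 _)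
      obtain ⟨sa, sbc, sd⟩ := step
      have h2n : (2 : ℝ) ^ n = 2 * (2 : ℝ) ^ (n - 1) := by
        conv_lhs => rw [show n = (n - 1) + 1 from (Nat.succ_pred_eq_of_pos hn).symm]
        rw [pow_succ]; ring
      have hCst : 2 * ((2 : ℝ) ^ (n - 1) * (∏ i : Fin n, c (j i.castSucc))
            * c (j (Fin.last n)))
          = (2 : ℝ) ^ (n + 1 - 1) * ∏ i : Fin (n + 1), c (j i) := by
        rw [Nat.add_sub_cancel, Fin.prod_univ_castSucc, h2n]; ring
      refine ⟨?_, fun δ h1 h2 => ?_, fun δ₁ δ₂ h1 h2 h3 => ?_⟩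
      · exact NBound_congr (by push_cast; ring) (by push_cast; ring)
          hpr.symm hCst sa
      · have h1' : (n : ℝ) + σ ≤ δ := by push_cast at h1; linarith
        obtain ⟨u1, u2⟩ := sbc δ h1' h2
        exact ⟨NBound_congr (by push_cast; ring) rfl (by rw [hpr]; rfl) hCst u1,
          NBound_congr rfl (by push_cast; ring) (by rw [hpr]; rfl) hCst u2⟩
      · have h3' : δ₁ + δ₂ < N - ((n : ℝ) + 1) := by push_cast at h3; linarith
        exact NBound_congr rfl rfl (by rw [hpr]; rfl) hCst (sd δ₁ δ₂ h1 h2 h3')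
end
end

section
/- Assume the geometric control condition holds. Then, for each choice of sign ±, for every w ∈ Ω_b^±((0,∞)) there exists t ≥ 0 such that a(X(±t, w)) > 0. -/
open MeasureTheory Complex Filter
open scoped ENNReal NNReal Topology

noncomputable section

/-- Euclidean space `ℝ^d`. -/
abbrev Ed (d : ℕ) := EuclideanSpace ℝ (Fin d)

/-- The Japanese bracket `⟨x⟩ = (1 + |x|²)^(1/2)`. -/
def jap {d : ℕ} (x : Ed d) : ℝ := Real.sqrt (1 + ‖x‖ ^ 2)

/-- The geometric data of the problem: a long-range perturbation `G` of the identity matrix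
(smooth, symmetric, positive definite, with symbol-like decay of all derivatives) and a
short-range nonnegative smooth absorption index `a`. -/
structure GeomSetup (d : ℕ) : Type where
  G : Ed d → Matrix (Fin d) (Fin d) ℝ
  a : Ed d → ℝ
  ρ : ℝ
  ρ_pos : 0 < ρ
  G_smooth : ∀ j k, ContDiff ℝ (⊤ : ℕ∞) fun x => G x j k
  G_symm : ∀ x, (G x).IsSymm
  G_posdef : ∀ x, (G x).PosDef
  G_decay : ∀ n : ℕ, ∃ c : ℝ, ∀ j k, ∀ x : Ed d,
    ‖iteratedFDeriv ℝ n (fun y : Ed d => G y j k - if j = k then (1 : ℝ) else 0) x‖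
      ≤ c * jap x ^ (-ρ - (n : ℝ))
  a_smooth : ContDiff ℝ (⊤ : ℕ∞) a
  a_nonneg : ∀ x, 0 ≤ a x
  a_decay : ∀ n : ℕ, ∃ c : ℝ, ∀ x : Ed d,
    ‖iteratedFDeriv ℝ n a x‖ ≤ c * jap x ^ (-1 - ρ - (n : ℝ))

/-- The principal symbol `p(x,ξ) = ⟨G(x)ξ, ξ⟩`. -/
def pHam {d : ℕ} (S : GeomSetup d) (w : Ed d × Ed d) : ℝ :=
  ∑ j, ∑ k, S.G w.1 j k * w.2 j * w.2 k

/-- `Φ` is the (globally defined) Hamiltonian flow of `p`: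
`∂_t X = ∇_ξ p`, `∂_t Ξ = -∇_x p`, `Φ⁰ = id`. -/
def IsHamFlow {d : ℕ} (S : GeomSetup d) (Φ : ℝ → Ed d × Ed d → Ed d × Ed d) : Prop :=
  (∀ w, Φ 0 w = w) ∧
  ∀ w t, HasDerivAt (fun s => Φ s w)
    (gradient (fun ξ => pHam S ((Φ t w).1, ξ)) (Φ t w).2,
     -gradient (fun x => pHam S (x, (Φ t w).2)) (Φ t w).1) t

/-- The forward (`σ = 1`) and backward (`σ = -1`) trapped sets
`Ω_b^± = {w : sup_{t ≥ 0} |X(±t,w)| < ∞}`. -/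
def OmegaB {d : ℕ} (Φ : ℝ → Ed d × Ed d → Ed d × Ed d) (σ : ℝ) : Set (Ed d × Ed d) :=
  {w | ∃ M : ℝ, ∀ t : ℝ, 0 ≤ t → ‖(Φ (σ * t) w).1‖ ≤ M}

/-- The forward (`σ = 1`) and backward (`σ = -1`) non-trapped sets
`Ω_∞^± = {w : |X(±t,w)| → ∞ as t → ∞}`. -/
def OmegaInf {d : ℕ} (Φ : ℝ → Ed d × Ed d → Ed d × Ed d) (σ : ℝ) : Set (Ed d × Ed d) :=
  {w | Filter.Tendsto (fun t => ‖(Φ (σ * t) w).1‖) Filter.atTop Filter.atTop}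

/-- Geometric control: every trapped trajectory of positive energy meets the damping
region `{a > 0}`. -/
def GeoControl {d : ℕ} (S : GeomSetup d) (Φ : ℝ → Ed d × Ed d → Ed d × Ed d) : Prop :=
  ∀ w ∈ OmegaB Φ 1 ∩ OmegaB Φ (-1), 0 < pHam S w → ∃ t : ℝ, 0 < S.a ((Φ t w).1)

namespace SemiTrapAux

open Set Metric InnerProductSpace ContinuousLinearMap

variable {d : ℕ}

local notation "⟪" x ", " y "⟫" => @inner ℝ _ _ x y

/-- The Hamiltonian vector field. -/
def Vf (S : GeomSetup d) (z : Ed d × Ed d) : Ed d × Ed d :=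
  (gradient (fun ξ => pHam S (z.1, ξ)) z.2,
   -gradient (fun x => pHam S (x, z.2)) z.1)

lemma pHam_contDiff (S : GeomSetup d) : ContDiff ℝ (⊤ : ℕ∞) (pHam S) := by
  show ContDiff ℝ (⊤ : ℕ∞) fun w : Ed d × Ed d => ∑ j, ∑ k, S.G w.1 j k * w.2 j * w.2 k
  apply ContDiff.sum; intro j _
  apply ContDiff.sum; intro k _
  exact (((S.G_smooth j k).comp contDiff_fst).mul
      ((EuclideanSpace.proj (𝕜 := ℝ) j).contDiff.comp contDiff_snd)).mul
    ((EuclideanSpace.proj (𝕜 := ℝ) k).contDiff.comp contDiff_snd)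

lemma pHam_diff (S : GeomSetup d) (z : Ed d × Ed d) : DifferentiableAt ℝ (pHam S) z :=
  ((pHam_contDiff S).differentiable (by simp)) z

lemma hasFDerivAt_pHam_left (S : GeomSetup d) (x ξ : Ed d) :
    HasFDerivAt (fun y => pHam S (y, ξ))
      ((fderiv ℝ (pHam S) (x, ξ)).comp (ContinuousLinearMap.inl ℝ (Ed d) (Ed d))) x :=
  (pHam_diff S (x, ξ)).hasFDerivAt.comp (g := pHam S) x (hasFDerivAt_prodMk_left (𝕜 := ℝ) x ξ)

lemma hasFDerivAt_pHam_right (S : GeomSetup d) (x ξ : Ed d) :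
    HasFDerivAt (fun η => pHam S (x, η))
      ((fderiv ℝ (pHam S) (x, ξ)).comp (ContinuousLinearMap.inr ℝ (Ed d) (Ed d))) ξ :=
  (pHam_diff S (x, ξ)).hasFDerivAt.comp ξ (hasFDerivAt_prodMk_right (𝕜 := ℝ) x ξ)

lemma gradX_eq (S : GeomSetup d) (x ξ : Ed d) :
    gradient (fun y => pHam S (y, ξ)) x
      = (toDual ℝ (Ed d)).symm ((fderiv ℝ (pHam S) (x, ξ)).comp (ContinuousLinearMap.inl ℝ (Ed d) (Ed d))) := by
  show (toDual ℝ (Ed d)).symm (fderiv ℝ (fun y => pHam S (y, ξ)) x) = _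
  rw [(hasFDerivAt_pHam_left S x ξ).fderiv]

lemma gradXi_eq (S : GeomSetup d) (x ξ : Ed d) :
    gradient (fun η => pHam S (x, η)) ξ
      = (toDual ℝ (Ed d)).symm ((fderiv ℝ (pHam S) (x, ξ)).comp (ContinuousLinearMap.inr ℝ (Ed d) (Ed d))) := by
  show (toDual ℝ (Ed d)).symm (fderiv ℝ (fun η => pHam S (x, η)) ξ) = _
  rw [(hasFDerivAt_pHam_right S x ξ).fderiv]

lemma fderiv_pHam_pair (S : GeomSetup d) (x ξ u v : Ed d) :
    fderiv ℝ (pHam S) (x, ξ) (u, v)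
      = ⟪gradient (fun y => pHam S (y, ξ)) x, u⟫ + ⟪gradient (fun η => pHam S (x, η)) ξ, v⟫ := by
  rw [gradX_eq, gradXi_eq, toDual_symm_apply, toDual_symm_apply,
    ContinuousLinearMap.comp_apply, ContinuousLinearMap.comp_apply,
    ContinuousLinearMap.inl_apply, ContinuousLinearMap.inr_apply, ← map_add]
  norm_num

lemma pHam_flow_const (S : GeomSetup d) {Φ : ℝ → Ed d × Ed d → Ed d × Ed d}
    (hΦ : IsHamFlow S Φ) (w : Ed d × Ed d) (t : ℝ) :
    pHam S (Φ t w) = pHam S w := by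
  have key : ∀ s : ℝ, HasDerivAt (fun u => pHam S (Φ u w)) 0 s := by
    intro s
    have h2 := (pHam_diff S (Φ s w)).hasFDerivAt.comp_hasDerivAt s (hΦ.2 w s)
    have h3 : fderiv ℝ (pHam S) (Φ s w)
        (gradient (fun ξ => pHam S ((Φ s w).1, ξ)) (Φ s w).2,
          -gradient (fun x => pHam S (x, (Φ s w).2)) (Φ s w).1) = 0 := by
      rw [fderiv_pHam_pair S (Φ s w).1 (Φ s w).2, inner_neg_right, real_inner_comm]
      ring
    rw [h3] at h2
    exact h2
  have hdiff : Differentiable ℝ fun u => pHam S (Φ u w) := fun s => (key s).differentiableAt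
  have := is_const_of_deriv_eq_zero hdiff (fun s => (key s).deriv) t 0
  simpa [hΦ.1 w] using this

lemma Vf_contDiff (S : GeomSetup d) : ContDiff ℝ (⊤ : ℕ∞) (Vf S) := by
  have hfd : ContDiff ℝ (⊤ : ℕ∞) (fderiv ℝ (pHam S)) :=
    (pHam_contDiff S).fderiv_right (le_of_eq (show ((⊤:ℕ∞) : WithTop ℕ∞) + 1 = ((⊤:ℕ∞) : WithTop ℕ∞) from rfl))
  have h1 : Vf S = fun z : Ed d × Ed d =>
      ((toDual ℝ (Ed d)).symm ((fderiv ℝ (pHam S) z).comp (ContinuousLinearMap.inr ℝ (Ed d) (Ed d))),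
       -(toDual ℝ (Ed d)).symm ((fderiv ℝ (pHam S) z).comp (ContinuousLinearMap.inl ℝ (Ed d) (Ed d)))) := by
    funext z
    obtain ⟨x, ξ⟩ := z
    show (gradient (fun η => pHam S (x, η)) ξ, -gradient (fun y => pHam S (y, ξ)) x) = _
    rw [gradXi_eq, gradX_eq]
  rw [h1]
  have hlin : ContDiff ℝ (⊤ : ℕ∞)
      ((toDual ℝ (Ed d)).symm.toContinuousLinearEquiv.toContinuousLinearMap : (Ed d →L[ℝ] ℝ) → Ed d) :=
    (toDual ℝ (Ed d)).symm.toContinuousLinearEquiv.toContinuousLinearMap.contDiff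
  exact ContDiff.prodMk (hlin.comp (hfd.clm_comp contDiff_const))
    ((hlin.comp (hfd.clm_comp contDiff_const)).neg)

lemma Vf_lip (S : GeomSetup d) (R : ℝ) :
    ∃ L : ℝ≥0, LipschitzOnWith L (Vf S) (Metric.closedBall 0 R) := by
  have hcd := Vf_contDiff S
  have hco : ContinuousOn (fderiv ℝ (Vf S)) (Metric.closedBall (0 : Ed d × Ed d) R) :=
    ((hcd.fderiv_right (le_of_eq (show ((⊤:ℕ∞) : WithTop ℕ∞) + 1 = ((⊤:ℕ∞) : WithTop ℕ∞) from rfl))).continuous).continuousOn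
  obtain ⟨C, hC⟩ := (isCompact_closedBall (0 : Ed d × Ed d) R).exists_bound_of_continuousOn hco
  refine ⟨C.toNNReal, Convex.lipschitzOnWith_of_nnnorm_hasFDerivWithin_le
    (fun z _ => ((hcd.differentiable (by simp) z).hasFDerivAt).hasFDerivWithinAt)
    (fun z hz => ?_) (convex_closedBall _ _)⟩
  have hC0 : 0 ≤ C := le_trans (norm_nonneg _) (hC z hz)
  rw [← NNReal.coe_le_coe, coe_nnnorm, Real.coe_toNNReal _ hC0]
  exact hC z hz

lemma pHam_zero (S : GeomSetup d) (x : Ed d) : pHam S (x, (0 : Ed d)) = 0 := by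
  show ∑ j, ∑ k, S.G x j k * (0 : Ed d) j * (0 : Ed d) k = 0
  simp

lemma pHam_pos (S : GeomSetup d) {x ξ : Ed d} (hξ : ξ ≠ 0) : 0 < pHam S (x, ξ) := by
  have hne : (fun i => ξ i) ≠ (0 : Fin d → ℝ) := by
    intro h0
    apply hξ
    ext i
    simpa using congrFun h0 i
  have h := (S.G_posdef x).dotProduct_mulVec_pos hne
  calc (0:ℝ) < dotProduct (star fun i => ξ i) (Matrix.mulVec (S.G x) fun i => ξ i) := h
    _ = pHam S (x, ξ) := by
      show ∑ j, (star fun i => ξ i) j * (Matrix.mulVec (S.G x) fun i => ξ i) j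
        = ∑ j, ∑ k, S.G x j k * ξ j * ξ k
      apply Finset.sum_congr rfl
      intro j _
      show (star fun i => ξ i) j * (∑ k, S.G x j k * ξ k) = _
      rw [Pi.star_apply, star_trivial, Finset.mul_sum]
      apply Finset.sum_congr rfl
      intro k _
      ring

lemma pHam_smul (S : GeomSetup d) (x ξ : Ed d) (c : ℝ) :
    pHam S (x, c • ξ) = c ^ 2 * pHam S (x, ξ) := by
  show ∑ j, ∑ k, S.G x j k * (c • ξ) j * (c • ξ) k = c ^ 2 * ∑ j, ∑ k, S.G x j k * ξ j * ξ k
  rw [Finset.mul_sum]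
  apply Finset.sum_congr rfl; intro j _
  rw [Finset.mul_sum]
  apply Finset.sum_congr rfl; intro k _
  show S.G x j k * (c * ξ j) * (c * ξ k) = _
  ring

lemma elliptic (S : GeomSetup d) (hd1 : 0 < d) (M : ℝ) :
    ∃ m : ℝ, 0 < m ∧ ∀ x ξ : Ed d, ‖x‖ ≤ M → m * ‖ξ‖ ^ 2 ≤ pHam S (x, ξ) := by
  set Kc : Set (Ed d × Ed d) := Metric.closedBall 0 (max M 0) ×ˢ Metric.sphere 0 1 with hKc
  have hKcomp : IsCompact Kc := (isCompact_closedBall _ _).prod (isCompact_sphere _ _)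
  have hne : Kc.Nonempty := by
    refine ⟨(0, EuclideanSpace.single ⟨0, hd1⟩ (1:ℝ)), ?_, ?_⟩
    · simp [le_max_right]
    · simp [EuclideanSpace.norm_single]
  obtain ⟨z0, hz0, hmin⟩ := hKcomp.exists_isMinOn hne (pHam_contDiff S).continuous.continuousOn
  have hz0n : ‖z0.2‖ = 1 := by simpa using hz0.2
  have hz0pos : 0 < pHam S (z0.1, z0.2) := by
    apply pHam_pos
    intro h
    rw [h] at hz0n
    simp at hz0n
  refine ⟨pHam S z0, by exact hz0pos, ?_⟩
  intro x ξ hx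
  rcases eq_or_ne ξ 0 with rfl | hξ
  · rw [pHam_zero]; simp
  · have hn : (0:ℝ) < ‖ξ‖ := norm_pos_iff.mpr hξ
    have hmem : (x, ‖ξ‖⁻¹ • ξ) ∈ Kc := by
      constructor
      · rw [Metric.mem_closedBall, dist_zero_right]
        exact le_trans hx (le_max_left _ _)
      · simp [Metric.mem_sphere, norm_smul, abs_of_pos (inv_pos.mpr hn), inv_mul_cancel₀ hn.ne']
    have h1 : pHam S z0 ≤ pHam S (x, ‖ξ‖⁻¹ • ξ) := hmin hmem
    have h2 : pHam S (x, ξ) = ‖ξ‖ ^ 2 * pHam S (x, ‖ξ‖⁻¹ • ξ) := by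
      rw [← pHam_smul]
      congr 2
      rw [smul_smul, mul_inv_cancel₀ hn.ne', one_smul]
    rw [h2]
    have h3 : (0:ℝ) ≤ ‖ξ‖ ^ 2 := sq_nonneg _
    nlinarith

section Boot

variable {E : Type*} [NormedAddCommGroup E] [NormedSpace ℝ E]

lemma boot (V : E → E) (L : ℝ≥0) (r : ℝ)
    (hL : LipschitzOnWith L V (Metric.closedBall 0 (r + 1)))
    (f g : ℝ → E) (hf : ∀ t, HasDerivAt f (V (f t)) t) (hg : ∀ t, HasDerivAt g (V (g t)) t)
    (T : ℝ) (hgK : ∀ u ∈ Set.Icc (0:ℝ) T, g u ∈ Metric.closedBall (0:E) r)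
    (hclose : dist (f 0) (g 0) * Real.exp (L * T) ≤ 1 / 2) :
    ∀ t ∈ Set.Icc (0:ℝ) T, dist (f t) (g t) ≤ dist (f 0) (g 0) * Real.exp (L * t) := by
  have hfc : Continuous f := continuous_iff_continuousAt.2 fun t => (hf t).continuousAt
  have hgc : Continuous g := continuous_iff_continuousAt.2 fun t => (hg t).continuousAt
  set D := dist (f 0) (g 0) with hD
  have hD0 : 0 ≤ D := dist_nonneg
  set s : Set ℝ := {t | dist (f t) (g t) ≤ D * Real.exp (L * t)} with hs
  have hcont : Continuous fun u => dist (f u) (g u) := hfc.dist hgc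
  have hclosed : IsClosed (s ∩ Set.Icc 0 T) := by
    refine IsClosed.inter (isClosed_le hcont ?_) isClosed_Icc
    exact continuous_const.mul (Real.continuous_exp.comp (continuous_const.mul continuous_id))
  have h0 : (0:ℝ) ∈ s := by simp [hs, ← hD]
  have expmono : ∀ u₁ u₂ : ℝ, u₁ ≤ u₂ → D * Real.exp (L * u₁) ≤ D * Real.exp (L * u₂) := by
    intro u₁ u₂ h
    have : Real.exp ((L:ℝ) * u₁) ≤ Real.exp (L * u₂) :=
      Real.exp_le_exp.mpr (mul_le_mul_of_nonneg_left h L.2)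
    exact mul_le_mul_of_nonneg_left this hD0
  have main : Set.Icc (0:ℝ) T ⊆ s := by
    apply hclosed.Icc_subset_of_forall_exists_gt h0
    rintro x ⟨hxs, hx0, hxT⟩ y hy
    have hdx : dist (f x) (g x) ≤ 1 / 2 :=
      le_trans hxs (le_trans (expmono x T hxT.le) hclose)
    have hnb : {u | dist (f u) (g u) < 1} ∈ 𝓝 x :=
      hcont.continuousAt.preimage_mem_nhds (Iio_mem_nhds (by linarith))
    obtain ⟨δ, hδpos, hball⟩ := Metric.mem_nhds_iff.mp hnb
    set c := min (min y T) (x + δ / 2) with hc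
    have hxc : x < c := lt_min (lt_min hy hxT) (by linarith)
    have hcT : c ≤ T := le_trans (min_le_left _ _) (min_le_right _ _)
    have hcy : c ≤ y := le_trans (min_le_left _ _) (min_le_left _ _)
    have hmemIcc : ∀ u ∈ Set.Ico x c, u ∈ Set.Icc (0:ℝ) T :=
      fun u hu => ⟨le_trans hx0 hu.1, le_trans hu.2.le hcT⟩
    have hlt1 : ∀ u ∈ Set.Ico x c, dist (f u) (g u) < 1 := by
      intro u hu
      apply hball
      rw [Metric.mem_ball, Real.dist_eq, _root_.abs_of_nonneg (by linarith [hu.1])]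
      have : u < x + δ / 2 := lt_of_lt_of_le hu.2 (min_le_right _ _)
      linarith
    have hmemg : ∀ u ∈ Set.Ico x c, g u ∈ Metric.closedBall (0:E) (r + 1) := by
      intro u hu
      have := hgK u (hmemIcc u hu)
      rw [mem_closedBall_zero_iff] at this ⊢
      linarith
    have hmemf : ∀ u ∈ Set.Ico x c, f u ∈ Metric.closedBall (0:E) (r + 1) := by
      intro u hu
      have h1 := hlt1 u hu
      have h2 := hgK u (hmemIcc u hu)
      rw [mem_closedBall_zero_iff] at h2 ⊢
      calc ‖f u‖ ≤ ‖g u‖ + dist (f u) (g u) := by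
            rw [dist_eq_norm]
            simpa using norm_add_le (g u) (f u - g u)
        _ ≤ r + 1 := by linarith
    have key := dist_le_of_trajectories_ODE_of_mem
      (v := fun _ : ℝ => V) (s := fun _ : ℝ => Metric.closedBall (0:E) (r + 1)) (K := L)
      (fun _ _ => hL) (hfc.continuousOn) (fun u _ => (hf u).hasDerivWithinAt) hmemf
      (hgc.continuousOn) (fun u _ => (hg u).hasDerivWithinAt) hmemg
      (le_refl (dist (f x) (g x))) (a := x) (b := c)
    refine ⟨c, ?_, hxc, hcy⟩
    have h1 := key c ⟨hxc.le, le_rfl⟩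
    show dist (f c) (g c) ≤ D * Real.exp (L * c)
    calc dist (f c) (g c) ≤ dist (f x) (g x) * Real.exp (L * (c - x)) := h1
      _ ≤ (D * Real.exp (L * x)) * Real.exp (L * (c - x)) :=
          mul_le_mul_of_nonneg_right hxs (Real.exp_pos _).le
      _ = D * Real.exp (L * c) := by
          rw [mul_assoc, ← Real.exp_add]
          ring_nf
  exact fun t ht => main ht

lemma boot_abs (V : E → E) (L : ℝ≥0) (r : ℝ)
    (hL : LipschitzOnWith L V (Metric.closedBall 0 (r + 1)))
    (f g : ℝ → E) (hf : ∀ t, HasDerivAt f (V (f t)) t) (hg : ∀ t, HasDerivAt g (V (g t)) t)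
    (T : ℝ) (hgK : ∀ u : ℝ, |u| ≤ T → g u ∈ Metric.closedBall (0:E) r)
    (hclose : dist (f 0) (g 0) * Real.exp (L * T) ≤ 1 / 2) :
    ∀ t : ℝ, |t| ≤ T → dist (f t) (g t) ≤ dist (f 0) (g 0) * Real.exp (L * T) := by
  have hD0 : (0:ℝ) ≤ dist (f 0) (g 0) := dist_nonneg
  have hexp : ∀ u : ℝ, u ≤ T →
      dist (f 0) (g 0) * Real.exp (L * u) ≤ dist (f 0) (g 0) * Real.exp (L * T) := by
    intro u hu
    exact mul_le_mul_of_nonneg_left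
      (Real.exp_le_exp.mpr (mul_le_mul_of_nonneg_left hu L.2)) hD0
  intro t ht
  have habs := _root_.abs_le.mp ht
  rcases le_or_gt 0 t with h | h
  · have := boot V L r hL f g hf hg T
      (fun u hu => hgK u (by rw [_root_.abs_of_nonneg hu.1]; exact hu.2)) hclose t ⟨h, habs.2⟩
    exact this.trans (hexp t habs.2)
  · have hf' : ∀ u : ℝ, HasDerivAt (fun s => f (-s)) (-V (f (-u))) u := by
      intro u
      have h1 := (hf (-u)).scomp u (hasDerivAt_neg u)
      simpa [Function.comp_def] using h1
    have hg' : ∀ u : ℝ, HasDerivAt (fun s => g (-s)) (-V (g (-u))) u := by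
      intro u
      have h1 := (hg (-u)).scomp u (hasDerivAt_neg u)
      simpa [Function.comp_def] using h1
    have hL' : LipschitzOnWith L (fun z => -V z) (Metric.closedBall 0 (r + 1)) := by
      intro a ha b hb
      rw [edist_neg_neg]
      exact hL ha hb
    have hVmatch : ∀ u : ℝ, HasDerivAt (fun s => f (-s)) ((fun z => -V z) (f (-u))) u := hf'
    have hVmatch' : ∀ u : ℝ, HasDerivAt (fun s => g (-s)) ((fun z => -V z) (g (-u))) u := hg'
    have := boot (fun z => -V z) L r hL' (fun s => f (-s)) (fun s => g (-s))
      hVmatch hVmatch' T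
      (fun u hu => hgK (-u) (by rw [_root_.abs_neg, _root_.abs_of_nonneg hu.1]; exact hu.2))
      (by simpa using hclose) (-t) ⟨by linarith, by linarith [habs.1]⟩
    simp only [neg_neg] at this
    exact this.trans (by simpa using hexp (-t) (by linarith [habs.1]))

end Boot

end SemiTrapAux

open SemiTrapAux

/-- **Semi-trapped trajectories meet the damping region** (Proposition 8.4).
Under the geometric control condition, for each sign `σ = ±1`, every
`w ∈ Ω_b^σ((0,∞))` satisfies `a(X(σ t, w)) > 0` for some `t ≥ 0`. -/
theorem semitrapped_geometric_control
    (d : ℕ) (hd : 3 ≤ d) (S : GeomSetup d)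
    (Φ : ℝ → Ed d × Ed d → Ed d × Ed d) (hΦ : IsHamFlow S Φ) (hctrl : GeoControl S Φ) :
    ∀ σ : ℝ, σ = 1 ∨ σ = -1 →
      ∀ w : Ed d × Ed d, w ∈ OmegaB Φ σ → 0 < pHam S w →
        ∃ t : ℝ, 0 ≤ t ∧ 0 < S.a ((Φ (σ * t) w).1) := by
  intro σ hσ w hw hE
  obtain ⟨M, hM⟩ := hw
  have hd1 : 0 < d := by omega
  have hσ2 : σ * σ = 1 := by rcases hσ with h | h <;> rw [h] <;> norm_num
  have hσabs : ∀ u : ℝ, |σ * u| = |u| := by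
    intro u
    rcases hσ with h | h <;> rw [h] <;> simp
  -- conservation of energy along the flow
  have hcons : ∀ s : ℝ, pHam S (Φ s w) = pHam S w := fun s => pHam_flow_const S hΦ w s
  obtain ⟨m, hm, helli⟩ := elliptic S hd1 (max M 0)
  set B := Real.sqrt (pHam S w / m) with hB
  have hbound2 : ∀ t : ℝ, 0 ≤ t → ‖(Φ (σ * t) w).2‖ ≤ B := by
    intro t ht
    have h1 : ‖(Φ (σ * t) w).1‖ ≤ max M 0 := le_trans (hM t ht) (le_max_left _ _)
    have h2 := helli (Φ (σ * t) w).1 (Φ (σ * t) w).2 h1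
    have h3 : pHam S ((Φ (σ * t) w).1, (Φ (σ * t) w).2) = pHam S w := hcons (σ * t)
    rw [h3] at h2
    have h4 : ‖(Φ (σ * t) w).2‖ ^ 2 ≤ pHam S w / m := by
      rw [le_div_iff₀ hm]
      linarith
    calc ‖(Φ (σ * t) w).2‖ = Real.sqrt (‖(Φ (σ * t) w).2‖ ^ 2) :=
          (Real.sqrt_sq (norm_nonneg _)).symm
      _ ≤ B := Real.sqrt_le_sqrt h4
  set r := max (max M 0) B with hr
  have hrK : ∀ t : ℝ, 0 ≤ t → Φ (σ * t) w ∈ Metric.closedBall (0 : Ed d × Ed d) r := by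
    intro t ht
    rw [mem_closedBall_zero_iff, Prod.norm_def]
    apply max_le
    · exact le_trans (le_trans (hM t ht) (le_max_left _ _)) (le_max_left _ _)
    · exact le_trans (hbound2 t ht) (le_max_right _ _)
  -- limit point of the trajectory
  obtain ⟨wl, hwlK, φn, hφmono, hφlim⟩ :=
    (isCompact_closedBall (0 : Ed d × Ed d) r).tendsto_subseq
      (x := fun n : ℕ => Φ (σ * n) w) (fun n => hrK n (Nat.cast_nonneg n))
  obtain ⟨L, hL⟩ := Vf_lip S (r + 1)
  have hφtop : Filter.Tendsto (fun n => ((φn n : ℕ) : ℝ)) atTop atTop :=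
    tendsto_natCast_atTop_atTop.comp hφmono.tendsto_atTop
  have dlim : Filter.Tendsto (fun n => dist wl (Φ (σ * (φn n : ℕ)) w)) atTop (𝓝 0) := by
    have := tendsto_const_nhds (x := wl) (f := atTop (α := ℕ)) |>.dist hφlim
    simpa using this
  -- shifted trajectories are solutions
  have hsol : ∀ (w0 : Ed d × Ed d) (c : ℝ) (u : ℝ),
      HasDerivAt (fun s => Φ (s + c) w0) (Vf S (Φ (u + c) w0)) u := by
    intro w0 c u
    have h1 : HasDerivAt (fun s => Φ s w0) (Vf S (Φ (u + c) w0)) (u + c) := hΦ.2 w0 (u + c)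
    have h2 : HasDerivAt (fun s : ℝ => s + c) 1 u := (hasDerivAt_id u).add_const c
    have h3 := h1.scomp u h2
    simpa [Function.comp_def] using h3
  have hsol0 : ∀ (w0 : Ed d × Ed d) (u : ℝ),
      HasDerivAt (fun s => Φ s w0) (Vf S (Φ u w0)) u := fun w0 u => hΦ.2 w0 u
  -- the key Gronwall estimate
  have key : ∀ T : ℝ, 0 ≤ T → ∀ n : ℕ, T ≤ ((φn n : ℕ) : ℝ) →
      dist wl (Φ (σ * (φn n : ℕ)) w) * Real.exp (L * T) ≤ 1 / 2 →
      ∀ t : ℝ, |t| ≤ T →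
        dist (Φ t wl) (Φ (t + σ * (φn n : ℕ)) w)
          ≤ dist wl (Φ (σ * (φn n : ℕ)) w) * Real.exp (L * T) := by
    intro T hT n hn hclose t ht
    set c := σ * ((φn n : ℕ) : ℝ) with hcdef
    have hgK : ∀ u : ℝ, |u| ≤ T → Φ (u + c) w ∈ Metric.closedBall (0 : Ed d × Ed d) r := by
      intro u hu
      have habs := _root_.abs_le.mp hu
      have hidx : u + c = σ * (σ * u + (φn n : ℕ)) := by
        rw [hcdef, mul_add, ← mul_assoc, hσ2]
        ring
      rw [hidx]
      apply hrK
      have : -(T : ℝ) ≤ σ * u := by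
        have hss : |σ * u| ≤ T := by rw [hσabs u]; exact hu
        have := _root_.abs_le.mp hss
        linarith [(_root_.abs_le.mp hss).1]
      linarith
    have hd0 : dist ((fun s => Φ s wl) 0) ((fun s => Φ (s + c) w) 0)
        = dist wl (Φ c w) := by simp [hΦ.1 wl]
    have := boot_abs (Vf S) L r hL (fun s => Φ s wl) (fun s => Φ (s + c) w)
      (hsol0 wl) (fun u => hsol w c u) T hgK (by rw [hd0]; exact hclose) t ht
    rw [hd0] at this
    exact this
  -- wl is fully trapped
  have htrap : ∀ s : ℝ, ‖Φ s wl‖ ≤ r + 1 := by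
    intro s
    have hev1 : ∀ᶠ n in atTop, |s| ≤ ((φn n : ℕ) : ℝ) := hφtop.eventually_ge_atTop _
    have hev2 : ∀ᶠ n in atTop,
        dist wl (Φ (σ * (φn n : ℕ)) w) * Real.exp (L * |s|) < 1 / 2 := by
      have h1 : Filter.Tendsto
          (fun n => dist wl (Φ (σ * (φn n : ℕ)) w) * Real.exp (L * |s|)) atTop (𝓝 0) := by
        simpa using dlim.mul_const (Real.exp ((L : ℝ) * |s|))
      exact h1.eventually_lt_const (by norm_num)
    obtain ⟨n, hn1, hn2⟩ := (hev1.and hev2).exists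
    have hk := key |s| (abs_nonneg s) n hn1 hn2.le s le_rfl
    have h1 : ‖Φ s wl‖ ≤ dist (Φ s wl) (Φ (s + σ * (φn n : ℕ)) w)
        + ‖Φ (s + σ * (φn n : ℕ)) w‖ := by
      rw [dist_eq_norm]
      simpa using norm_add_le (Φ s wl - Φ (s + σ * (φn n : ℕ)) w) (Φ (s + σ * (φn n : ℕ)) w)
    have h2 : ‖Φ (s + σ * (φn n : ℕ)) w‖ ≤ r := by
      rw [← mem_closedBall_zero_iff]
      have hidx : s + σ * ((φn n : ℕ) : ℝ) = σ * (σ * s + (φn n : ℕ)) := by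
        rw [mul_add, ← mul_assoc, hσ2]; ring
      rw [hidx]
      apply hrK
      have hss : |σ * s| ≤ ((φn n : ℕ) : ℝ) := by rw [hσabs s]; exact hn1
      have := _root_.abs_le.mp hss
      linarith [this.1]
    linarith [hk, hn2.le]
  have hmem : wl ∈ OmegaB Φ 1 ∩ OmegaB Φ (-1) := by
    constructor <;> exact ⟨r + 1, fun t _ => le_trans (norm_fst_le _) (htrap _)⟩
  have hEl : 0 < pHam S wl := by
    have hlimp : Filter.Tendsto (fun n => pHam S (Φ (σ * (φn n : ℕ)) w)) atTop
        (𝓝 (pHam S wl)) := ((pHam_contDiff S).continuous.tendsto wl).comp hφlim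
    have hconst : (fun n => pHam S (Φ (σ * (φn n : ℕ)) w)) = fun _ => pHam S w := by
      funext n; exact hcons _
    rw [hconst] at hlimp
    have := tendsto_nhds_unique hlimp tendsto_const_nhds
    rw [this]
    exact hE
  obtain ⟨t0, ht0⟩ := hctrl wl hmem hEl
  -- approximate the controlled point along the trajectory
  have happrox : Filter.Tendsto (fun n => Φ (t0 + σ * (φn n : ℕ)) w) atTop (𝓝 (Φ t0 wl)) := by
    rw [tendsto_iff_dist_tendsto_zero]
    apply squeeze_zero' (Filter.Eventually.of_forall fun n => dist_nonneg)
      (g := fun n => dist wl (Φ (σ * (φn n : ℕ)) w) * Real.exp (L * |t0|))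
    · have hev1 : ∀ᶠ n in atTop, |t0| ≤ ((φn n : ℕ) : ℝ) := hφtop.eventually_ge_atTop _
      have hev2 : ∀ᶠ n in atTop,
          dist wl (Φ (σ * (φn n : ℕ)) w) * Real.exp (L * |t0|) < 1 / 2 := by
        have h1 : Filter.Tendsto
            (fun n => dist wl (Φ (σ * (φn n : ℕ)) w) * Real.exp (L * |t0|)) atTop (𝓝 0) := by
          simpa using dlim.mul_const (Real.exp ((L : ℝ) * |t0|))
        exact h1.eventually_lt_const (by norm_num)
      filter_upwards [hev1, hev2] with n hn1 hn2
      rw [dist_comm]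
      exact key |t0| (abs_nonneg t0) n hn1 hn2.le t0 le_rfl
    · simpa using dlim.mul_const (Real.exp ((L : ℝ) * |t0|))
  have hev : ∀ᶠ n in atTop, 0 < S.a ((Φ (t0 + σ * (φn n : ℕ)) w).1) := by
    have hc : Filter.Tendsto (fun n => S.a ((Φ (t0 + σ * (φn n : ℕ)) w).1)) atTop
        (𝓝 (S.a ((Φ t0 wl).1))) :=
      ((S.a_smooth.continuous.comp continuous_fst).tendsto _).comp happrox
    exact hc.eventually_const_lt ht0
  have hevpos : ∀ᶠ n in atTop, 0 ≤ σ * t0 + ((φn n : ℕ) : ℝ) := by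
    have := hφtop.eventually_ge_atTop (-(σ * t0))
    filter_upwards [this] with n hn
    linarith
  obtain ⟨n, hn1, hn2⟩ := (hev.and hevpos).exists
  refine ⟨σ * t0 + (φn n : ℕ), hn2, ?_⟩
  have hidx : σ * (σ * t0 + ((φn n : ℕ) : ℝ)) = t0 + σ * (φn n : ℕ) := by
    rw [mul_add, ← mul_assoc, hσ2]; ring
  rw [hidx]
  exact hn1
end
end

section
/- There exist R > 0 and C ≥ 0 such that for all (x,ξ) ∈ ℝ^{2d} one has {p, f₀}(x,ξ) ≥ p(x,ξ) · (1 − C·1_{{|x| ≤ R}}(x)), where 1_{{|x| ≤ R}} is the indicator function of the ball {|x| ≤ R}. -/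
open MeasureTheory Complex Filter
open scoped ENNReal NNReal Topology

noncomputable section

/-- The symbol `f₀(x,ξ) = ⟨x, ξ⟩` of the generator of dilations. -/
def f0 {d : ℕ} (w : Ed d × Ed d) : ℝ := inner ℝ w.1 w.2

/-- The Poisson bracket `{f, g} = ∇_ξ f · ∇_x g - ∇_x f · ∇_ξ g` on `ℝ^{2d}`. -/
def poisson {d : ℕ} (f g : Ed d × Ed d → ℝ) (w : Ed d × Ed d) : ℝ :=
  (inner ℝ (gradient (fun ξ => f (w.1, ξ)) w.2) (gradient (fun x => g (x, w.2)) w.1) : ℝ)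
  - (inner ℝ (gradient (fun x => f (x, w.2)) w.1) (gradient (fun ξ => g (w.1, ξ)) w.2) : ℝ)

/- ### auxiliary lemmas -/


lemma EFI.toDual_innerSL {d : ℕ} (ξ : Ed d) :
    (InnerProductSpace.toDual ℝ (Ed d)).symm (innerSL ℝ ξ) = ξ := by
  have : innerSL ℝ ξ = InnerProductSpace.toDual ℝ (Ed d) ξ := by
    ext y; simp [InnerProductSpace.toDual_apply_apply]
  rw [this, LinearIsometryEquiv.symm_apply_apply]

lemma EFI.inner_gradient_eq {d : ℕ} {f : Ed d → ℝ} {L : Ed d →L[ℝ] ℝ} {x v : Ed d}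
    (h : HasFDerivAt f L x) : (inner ℝ (gradient f x) v : ℝ) = L v := by
  rw [(h.hasGradientAt).gradient, InnerProductSpace.toDual_symm_apply]

lemma EFI.grad_inner_right {d : ℕ} (x : Ed d) (ξ : Ed d) :
    gradient (fun y : Ed d => (inner ℝ y ξ : ℝ)) x = ξ := by
  have h : HasFDerivAt (fun y : Ed d => (inner ℝ y ξ : ℝ)) (innerSL ℝ ξ) x := by
    have : (fun y : Ed d => (inner ℝ y ξ : ℝ)) = fun y => (inner ℝ ξ y : ℝ) := by
      funext y; exact real_inner_comm _ _
    rw [this]; exact (innerSL ℝ ξ).hasFDerivAt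
  rw [h.hasGradientAt.gradient, EFI.toDual_innerSL]

lemma EFI.grad_inner_left {d : ℕ} (x : Ed d) (ξ : Ed d) :
    gradient (fun η : Ed d => (inner ℝ x η : ℝ)) ξ = x := by
  have h : HasFDerivAt (fun η : Ed d => (inner ℝ x η : ℝ)) (innerSL ℝ x) ξ :=
    (innerSL ℝ x).hasFDerivAt
  rw [h.hasGradientAt.gradient, EFI.toDual_innerSL]

lemma EFI.hasFDeriv_qform {d : ℕ} (A : Matrix (Fin d) (Fin d) ℝ) (ξ : Ed d) :
    HasFDerivAt (fun η : Ed d => ∑ j, ∑ k, A j k * η j * η k)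
      (∑ j, ∑ k, A j k • ((ξ j : ℝ) • (EuclideanSpace.proj k : Ed d →L[ℝ] ℝ)
        + (ξ k : ℝ) • (EuclideanSpace.proj j : Ed d →L[ℝ] ℝ))) ξ := by
  apply HasFDerivAt.fun_sum; intro j _
  apply HasFDerivAt.fun_sum; intro k _
  have hj : HasFDerivAt (fun η : Ed d => η j) (EuclideanSpace.proj j : Ed d →L[ℝ] ℝ) ξ :=
    (EuclideanSpace.proj j (𝕜 := ℝ)).hasFDerivAt
  have hk : HasFDerivAt (fun η : Ed d => η k) (EuclideanSpace.proj k : Ed d →L[ℝ] ℝ) ξ :=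
    (EuclideanSpace.proj k (𝕜 := ℝ)).hasFDerivAt
  have h := ((hj.mul hk).const_mul (A j k))
  convert h using 2
  rfl
  exact mul_assoc _ _ _

lemma EFI.qform_deriv_apply {d : ℕ} (A : Matrix (Fin d) (Fin d) ℝ) (ξ : Ed d) :
    (∑ j, ∑ k, A j k • ((ξ j : ℝ) • (EuclideanSpace.proj k : Ed d →L[ℝ] ℝ)
        + (ξ k : ℝ) • (EuclideanSpace.proj j : Ed d →L[ℝ] ℝ))) ξ
      = 2 * ∑ j, ∑ k, A j k * ξ j * ξ k := by
  simp only [ContinuousLinearMap.coe_sum', Finset.sum_apply, ContinuousLinearMap.smul_apply,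
    ContinuousLinearMap.add_apply, PiLp.proj_apply, smul_eq_mul, Finset.mul_sum]
  apply Finset.sum_congr rfl; intro j _
  apply Finset.sum_congr rfl; intro k _
  ring

lemma EFI.hasFDeriv_xpart {d : ℕ} (g : Fin d → Fin d → Ed d → ℝ) (x : Ed d)
    (hg : ∀ j k, DifferentiableAt ℝ (g j k) x) (c : Fin d → ℝ) :
    HasFDerivAt (fun y : Ed d => ∑ j, ∑ k, g j k y * c j * c k)
      (∑ j, ∑ k, (c j * c k) • fderiv ℝ (g j k) x) x := by
  apply HasFDerivAt.fun_sum; intro j _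
  apply HasFDerivAt.fun_sum; intro k _
  have h := (((hg j k).hasFDerivAt.mul_const (c j)).mul_const (c k))
  convert h using 1
  rfl
  rw [smul_smul, mul_comm]

lemma EFI.norm_sq_eq {d : ℕ} (ξ : Ed d) : ‖ξ‖ ^ 2 = ∑ j, ξ j ^ 2 := by
  rw [EuclideanSpace.norm_eq, Real.sq_sqrt (by positivity)]
  simp [sq_abs]

lemma EFI.abs_coord_le {d : ℕ} (ξ : Ed d) (j : Fin d) : |ξ j| ≤ ‖ξ‖ := by
  have h1 : |ξ j| ^ 2 ≤ ‖ξ‖ ^ 2 := by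
    rw [EFI.norm_sq_eq, _root_.sq_abs]
    exact Finset.single_le_sum (f := fun i => ξ i ^ 2) (fun i _ => sq_nonneg _)
      (Finset.mem_univ j)
  have := Real.sqrt_le_sqrt h1
  rwa [Real.sqrt_sq (abs_nonneg _), Real.sqrt_sq (norm_nonneg _)] at this

lemma EFI.jap_pos {d : ℕ} (x : Ed d) : 0 < jap x := Real.sqrt_pos.mpr (by positivity)

lemma EFI.one_le_jap {d : ℕ} (x : Ed d) : 1 ≤ jap x := by
  have := Real.sqrt_le_sqrt (show (1:ℝ) ≤ 1 + ‖x‖^2 by linarith [sq_nonneg ‖x‖])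
  rwa [Real.sqrt_one] at this

lemma EFI.norm_le_jap {d : ℕ} (x : Ed d) : ‖x‖ ≤ jap x := by
  have h : ‖x‖ = Real.sqrt (‖x‖^2) := (Real.sqrt_sq (norm_nonneg x)).symm
  calc ‖x‖ = Real.sqrt (‖x‖^2) := h
  _ ≤ Real.sqrt (1 + ‖x‖^2) := Real.sqrt_le_sqrt (by linarith)

lemma EFI.pHam_cont {d : ℕ} (S : GeomSetup d) : Continuous (pHam S) := by
  apply continuous_finset_sum; intro j _
  apply continuous_finset_sum; intro k _
  exact (((S.G_smooth j k).continuous.comp continuous_fst).mul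
      ((EuclideanSpace.proj j (𝕜 := ℝ)).continuous.comp continuous_snd)).mul
    ((EuclideanSpace.proj k (𝕜 := ℝ)).continuous.comp continuous_snd)

lemma EFI.pHam_pos {d : ℕ} (S : GeomSetup d) (x : Ed d) {ξ : Ed d} (hξ : ξ ≠ 0) :
    0 < pHam S (x, ξ) := by
  have hne : (fun i => ξ i) ≠ (0 : Fin d → ℝ) := by
    intro h
    apply hξ
    ext i
    exact congrFun h i
  have h := (S.G_posdef x).dotProduct_mulVec_pos hne
  have heq : dotProduct (star (fun i => ξ i)) ((S.G x).mulVec fun i => ξ i)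
      = pHam S (x, ξ) := by
    simp only [star_trivial, dotProduct, Matrix.mulVec, pHam, Finset.mul_sum]
    apply Finset.sum_congr rfl; intro j _
    apply Finset.sum_congr rfl; intro k _
    ring
  rwa [heq] at h

lemma EFI.pHam_smul {d : ℕ} (S : GeomSetup d) (x : Ed d) (c : ℝ) (ξ : Ed d) :
    pHam S (x, c • ξ) = c ^ 2 * pHam S (x, ξ) := by
  simp only [pHam, Finset.mul_sum]
  apply Finset.sum_congr rfl; intro j _
  apply Finset.sum_congr rfl; intro k _
  simp only [PiLp.smul_apply, smul_eq_mul]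
  ring

/-- lower bound by the norm squared on a ball, by compactness. -/
lemma EFI.exists_unif_lower {d : ℕ} (hd : 3 ≤ d) (S : GeomSetup d) (R : ℝ) (hR : 0 ≤ R) :
    ∃ m : ℝ, 0 < m ∧ ∀ x ξ : Ed d, ‖x‖ ≤ R → m * ‖ξ‖ ^ 2 ≤ pHam S (x, ξ) := by
  set K : Set (Ed d × Ed d) := Metric.closedBall (0 : Ed d) R ×ˢ Metric.sphere (0 : Ed d) 1
    with hKdef
  have hK : IsCompact K := (isCompact_closedBall _ _).prod (isCompact_sphere _ _)
  have hne : K.Nonempty := by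
    refine ⟨(0, EuclideanSpace.single (⟨0, by omega⟩ : Fin d) (1 : ℝ)), ?_, ?_⟩
    · simpa using hR
    · simp [mem_sphere_zero_iff_norm, EuclideanSpace.norm_single]
  obtain ⟨z, hzK, hz⟩ := hK.exists_isMinOn hne (EFI.pHam_cont S).continuousOn
  have hz2 : ‖z.2‖ = 1 := by
    have := hzK.2
    simpa [mem_sphere_zero_iff_norm] using this
  have hz2ne : z.2 ≠ 0 := by
    intro h; rw [h] at hz2; simp at hz2
  refine ⟨pHam S z, ?_, ?_⟩
  · have := EFI.pHam_pos S z.1 hz2ne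
    simpa using this
  · intro x ξ hx
    rcases eq_or_ne ξ 0 with hξ | hξ
    · subst hξ
      simp [pHam]
    · have hnξ : 0 < ‖ξ‖ := norm_pos_iff.mpr hξ
      set u : Ed d := ‖ξ‖⁻¹ • ξ with hu
      have hunorm : ‖u‖ = 1 := by
        rw [hu, norm_smul]
        simp [abs_of_pos (inv_pos.mpr hnξ), inv_mul_cancel₀ (ne_of_gt hnξ)]
      have huK : (x, u) ∈ K := by
        constructor
        · simpa [Metric.mem_closedBall] using hx
        · simpa [mem_sphere_zero_iff_norm] using hunorm
      have hmin : pHam S z ≤ pHam S (x, u) := hz huK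
      have hsc : pHam S (x, ξ) = ‖ξ‖ ^ 2 * pHam S (x, u) := by
        have : ξ = ‖ξ‖ • u := by
          rw [hu, smul_smul, mul_inv_cancel₀ (ne_of_gt hnξ), one_smul]
        conv_lhs => rw [this]
        rw [EFI.pHam_smul]
      rw [hsc]
      have : pHam S z * ‖ξ‖ ^ 2 ≤ pHam S (x, u) * ‖ξ‖ ^ 2 :=
        mul_le_mul_of_nonneg_right hmin (by positivity)
      linarith


/-- **The generator of dilations is an escape function at infinity** (Lemma 8.5).
There exist `R > 0` and `C ≥ 0` such that on `ℝ^{2d}`: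
`{p, f₀}(x,ξ) ≥ p(x,ξ) (1 - C 1_{{|x| ≤ R}}(x))`. -/
theorem escape_function_at_infinity
    (d : ℕ) (hd : 3 ≤ d) (S : GeomSetup d) :
    ∃ R C : ℝ, 0 < R ∧ 0 ≤ C ∧ ∀ w : Ed d × Ed d,
      pHam S w * (1 - C * Set.indicator {x : Ed d | ‖x‖ ≤ R} (fun _ => (1 : ℝ)) w.1)
        ≤ poisson (pHam S) f0 w := by
  classical
  obtain ⟨c₀, hc₀⟩ := S.G_decay 0
  obtain ⟨c₁, hc₁⟩ := S.G_decay 1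
  set ρ := S.ρ with hρdef
  have hρ : 0 < ρ := S.ρ_pos
  -- the constants are nonnegative
  have j0 : Fin d := ⟨0, by omega⟩
  have hc₀0 : 0 ≤ c₀ := by
    have h := (norm_nonneg _).trans (hc₀ j0 j0 0)
    have hp := Real.rpow_pos_of_pos (EFI.jap_pos (0 : Ed d)) (-ρ - ((0:ℕ):ℝ))
    exact le_of_not_gt fun hneg => absurd h (not_le.mpr (mul_neg_of_neg_of_pos hneg hp))
  have hc₁0 : 0 ≤ c₁ := by
    have h := (norm_nonneg _).trans (hc₁ j0 j0 0)
    have hp := Real.rpow_pos_of_pos (EFI.jap_pos (0 : Ed d)) (-ρ - ((1:ℕ):ℝ))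
    exact le_of_not_gt fun hneg => absurd h (not_le.mpr (mul_neg_of_neg_of_pos hneg hp))
  set D : ℝ := (d : ℝ) ^ 2 with hDdef
  have hD0 : 0 ≤ D := by positivity
  set K₀ : ℝ := (c₀ + c₁) * D + 1 with hK₀def
  have hK₀1 : 1 ≤ K₀ := by nlinarith
  have hK₀0 : 0 < K₀ := by linarith
  set R : ℝ := K₀ ^ ((1:ℝ) / ρ) with hRdef
  have hR1 : 1 ≤ R := Real.one_le_rpow hK₀1 (by positivity)
  have hR0 : 0 < R := by linarith
  obtain ⟨m, hm0, hm⟩ := EFI.exists_unif_lower hd S R hR0.le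
  refine ⟨R, c₁ * D / m, hR0, div_nonneg (mul_nonneg hc₁0 hD0) hm0.le, ?_⟩
  intro w
  set x := w.1 with hxdef
  set ξ := w.2 with hξdef
  -- pointwise bounds on the G-entries and their derivatives
  have hGdiff : ∀ j k, DifferentiableAt ℝ (fun y : Ed d => S.G y j k) x :=
    fun j k => ((S.G_smooth j k).differentiable (by simp)).differentiableAt
  -- the Poisson bracket formula
  have hq := EFI.hasFDeriv_qform (S.G x) ξ
  have hx2 := EFI.hasFDeriv_xpart (fun j k y => S.G y j k) x hGdiff (fun j => ξ j)
  have epoisson : poisson (pHam S) f0 w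
      = 2 * pHam S w - ∑ j, ∑ k, (ξ j * ξ k) * (fderiv ℝ (fun y : Ed d => S.G y j k) x x) := by
    have e1 : gradient (fun x' => f0 (x', ξ)) x = ξ := EFI.grad_inner_right x ξ
    have e2 : gradient (fun ξ' => f0 (x, ξ')) ξ = x := EFI.grad_inner_left x ξ
    have e3 : (inner ℝ (gradient (fun ξ' => pHam S (x, ξ')) ξ) ξ : ℝ) = 2 * pHam S w := by
      rw [EFI.inner_gradient_eq (f := fun ξ' => pHam S (x, ξ')) hq]
      rw [EFI.qform_deriv_apply]
      rfl
    have e4 : (inner ℝ (gradient (fun x' => pHam S (x', ξ)) x) x : ℝ)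
        = ∑ j, ∑ k, (ξ j * ξ k) * (fderiv ℝ (fun y : Ed d => S.G y j k) x x) := by
      rw [EFI.inner_gradient_eq (f := fun x' => pHam S (x', ξ)) hx2]
      simp [ContinuousLinearMap.sum_apply, ContinuousLinearMap.smul_apply, smul_eq_mul]
    rw [poisson, ← hxdef, ← hξdef, e1, e2, e3, e4]
  set Dx : ℝ := ∑ j, ∑ k, (ξ j * ξ k) * (fderiv ℝ (fun y : Ed d => S.G y j k) x x) with hDxdef
  -- bound on each entry derivative
  have hfd : ∀ j k, |fderiv ℝ (fun y : Ed d => S.G y j k) x x| ≤ c₁ * jap x ^ (-ρ) := by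
    intro j k
    have heq : fderiv ℝ (fun y : Ed d => S.G y j k) x
        = fderiv ℝ (fun y : Ed d => S.G y j k - if j = k then (1:ℝ) else 0) x := by
      rw [fderiv_sub_const]
    have hnorm : ‖fderiv ℝ (fun y : Ed d => S.G y j k - if j = k then (1:ℝ) else 0) x‖
        ≤ c₁ * jap x ^ (-ρ - 1) := by
      have h1 : ‖fderiv ℝ (fun y : Ed d => S.G y j k - if j = k then (1:ℝ) else 0) x‖
          = ‖iteratedFDeriv ℝ 1 (fun y : Ed d => S.G y j k - if j = k then (1:ℝ) else 0) x‖ := by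
        rw [← norm_iteratedFDeriv_fderiv (n := 0), norm_iteratedFDeriv_zero]
      rw [h1]
      have := hc₁ j k x
      norm_num at this ⊢
      exact this
    calc |fderiv ℝ (fun y : Ed d => S.G y j k) x x|
        ≤ ‖fderiv ℝ (fun y : Ed d => S.G y j k) x‖ * ‖x‖ :=
          (fderiv ℝ (fun y : Ed d => S.G y j k) x).le_opNorm x
      _ ≤ (c₁ * jap x ^ (-ρ - 1)) * jap x := by
          apply mul_le_mul (by rw [heq]; exact hnorm) (EFI.norm_le_jap x) (norm_nonneg x)
          exact mul_nonneg hc₁0 (Real.rpow_pos_of_pos (EFI.jap_pos x) _).le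
      _ = c₁ * jap x ^ (-ρ) := by
          rw [mul_assoc, ← Real.rpow_add_one (ne_of_gt (EFI.jap_pos x)) (-ρ - 1)]
          norm_num
  -- bound on Dx
  have hDx : |Dx| ≤ c₁ * D * jap x ^ (-ρ) * ‖ξ‖ ^ 2 := by
    calc |Dx| ≤ ∑ j, ∑ k, |(ξ j * ξ k) * (fderiv ℝ (fun y : Ed d => S.G y j k) x x)| := by
          refine (Finset.abs_sum_le_sum_abs _ _).trans ?_
          apply Finset.sum_le_sum; intro j _
          exact Finset.abs_sum_le_sum_abs _ _
      _ ≤ ∑ _j : Fin d, ∑ _k : Fin d, ‖ξ‖ * ‖ξ‖ * (c₁ * jap x ^ (-ρ)) := by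
          apply Finset.sum_le_sum; intro j _
          apply Finset.sum_le_sum; intro k _
          rw [abs_mul, abs_mul]
          apply mul_le_mul (mul_le_mul (EFI.abs_coord_le ξ j) (EFI.abs_coord_le ξ k)
            (abs_nonneg _) (norm_nonneg _)) (hfd j k) (abs_nonneg _)
          positivity
      _ = c₁ * D * jap x ^ (-ρ) * ‖ξ‖ ^ 2 := by
          simp [Finset.sum_const, hDdef]
          ring
  -- lower bound on pHam
  have hple : (1 - c₀ * D * jap x ^ (-ρ)) * ‖ξ‖ ^ 2 ≤ pHam S w := by
    have hid : ∑ j, ∑ k, (if j = k then (1:ℝ) else 0) * ξ j * ξ k = ‖ξ‖ ^ 2 := by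
      rw [EFI.norm_sq_eq]
      apply Finset.sum_congr rfl; intro j _
      simp [ite_mul, Finset.sum_ite_eq, pow_two]
    have hdecomp : pHam S w = ‖ξ‖ ^ 2
        + ∑ j, ∑ k, (S.G x j k - if j = k then (1:ℝ) else 0) * ξ j * ξ k := by
      rw [← hid, ← Finset.sum_add_distrib]
      apply Finset.sum_congr rfl; intro j _
      rw [← Finset.sum_add_distrib]
      apply Finset.sum_congr rfl; intro k _
      ring
    have hE : |∑ j, ∑ k, (S.G x j k - if j = k then (1:ℝ) else 0) * ξ j * ξ k|
        ≤ c₀ * D * jap x ^ (-ρ) * ‖ξ‖ ^ 2 := by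
      calc |∑ j, ∑ k, (S.G x j k - if j = k then (1:ℝ) else 0) * ξ j * ξ k|
          ≤ ∑ j, ∑ k, |(S.G x j k - if j = k then (1:ℝ) else 0) * ξ j * ξ k| := by
            refine (Finset.abs_sum_le_sum_abs _ _).trans ?_
            apply Finset.sum_le_sum; intro j _
            exact Finset.abs_sum_le_sum_abs _ _
        _ ≤ ∑ _j : Fin d, ∑ _k : Fin d, c₀ * jap x ^ (-ρ) * ‖ξ‖ * ‖ξ‖ := by
            apply Finset.sum_le_sum; intro j _
            apply Finset.sum_le_sum; intro k _
            rw [abs_mul, abs_mul]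
            have hGjk : |S.G x j k - if j = k then (1:ℝ) else 0| ≤ c₀ * jap x ^ (-ρ) := by
              have := hc₀ j k x
              rw [norm_iteratedFDeriv_zero] at this
              norm_num at this
              exact this
            have h00 : (0:ℝ) ≤ c₀ * jap x ^ (-ρ) :=
              mul_nonneg hc₀0 (Real.rpow_pos_of_pos (EFI.jap_pos x) _).le
            apply mul_le_mul (mul_le_mul hGjk (EFI.abs_coord_le ξ j) (abs_nonneg _) h00)
              (EFI.abs_coord_le ξ k) (abs_nonneg _)
            exact mul_nonneg h00 (norm_nonneg _)
        _ = c₀ * D * jap x ^ (-ρ) * ‖ξ‖ ^ 2 := by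
            simp [Finset.sum_const, hDdef]
            ring
    have := abs_le.mp hE
    rw [hdecomp]
    nlinarith [this.1, this.2]
  have hjap_nonneg : (0:ℝ) ≤ jap x ^ (-ρ) := (Real.rpow_pos_of_pos (EFI.jap_pos x) _).le
  have hξ2 : (0:ℝ) ≤ ‖ξ‖ ^ 2 := by positivity
  rw [epoisson]
  by_cases hmem : ‖x‖ ≤ R
  · -- inside the ball
    rw [Set.indicator_of_mem (by simpa using hmem)]
    have hj1 : jap x ^ (-ρ) ≤ 1 :=
      Real.rpow_le_one_of_one_le_of_nonpos (EFI.one_le_jap x) (by linarith)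
    have hDx' : Dx ≤ c₁ * D * ‖ξ‖ ^ 2 := by
      have h1 := (le_abs_self Dx).trans hDx
      nlinarith [mul_nonneg (mul_nonneg (mul_nonneg hc₁0 hD0) hξ2) (sub_nonneg.mpr hj1)]
    have hmlow : m * ‖ξ‖ ^ 2 ≤ pHam S w := by
      have h := hm x ξ hmem
      rwa [show ((x, ξ) : Ed d × Ed d) = w from rfl] at h
    have hp0 : 0 ≤ pHam S w := le_trans (mul_nonneg hm0.le hξ2) hmlow
    have hCp : Dx ≤ (c₁ * D / m) * pHam S w := by
      have h2 : (c₁ * D / m) * (m * ‖ξ‖ ^ 2) ≤ (c₁ * D / m) * pHam S w :=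
        mul_le_mul_of_nonneg_left hmlow (div_nonneg (mul_nonneg hc₁0 hD0) hm0.le)
      have h3 : (c₁ * D / m) * (m * ‖ξ‖ ^ 2) = c₁ * D * ‖ξ‖ ^ 2 := by
        field_simp
      linarith
    linarith [hCp, hp0]
  · -- outside the ball
    rw [Set.indicator_of_notMem (by simpa using hmem)]
    push_neg at hmem
    have hjR : R ≤ jap x := hmem.le.trans (EFI.norm_le_jap x)
    have hjap_le : jap x ^ (-ρ) ≤ K₀⁻¹ := by
      have h1 : jap x ^ (-ρ) ≤ R ^ (-ρ) :=
        Real.rpow_le_rpow_of_nonpos hR0 hjR (by linarith)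
      have h2 : R ^ (-ρ) = K₀⁻¹ := by
        have hρne : ρ ≠ 0 := ne_of_gt hρ
        rw [hRdef, ← Real.rpow_mul hK₀0.le]
        rw [show (1/ρ) * (-ρ) = -1 by field_simp]
        rw [Real.rpow_neg_one]
      rw [← h2]; exact h1
    have hkey : (c₀ + c₁) * D * (jap x ^ (-ρ)) ≤ 1 := by
      have h1 : (c₀ + c₁) * D * (jap x ^ (-ρ)) ≤ (c₀ + c₁) * D * K₀⁻¹ :=
        mul_le_mul_of_nonneg_left hjap_le (mul_nonneg (by linarith) hD0)
      have h2 : (c₀ + c₁) * D * K₀⁻¹ ≤ K₀ * K₀⁻¹ :=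
        mul_le_mul_of_nonneg_right (by rw [hK₀def]; linarith) (inv_nonneg.mpr hK₀0.le)
      rw [mul_inv_cancel₀ (ne_of_gt hK₀0)] at h2
      linarith
    have hDxle : Dx ≤ pHam S w := by
      have h1 := (le_abs_self Dx).trans hDx
      have h2 : (c₀ + c₁) * D * (jap x ^ (-ρ)) * ‖ξ‖ ^ 2 ≤ 1 * ‖ξ‖ ^ 2 :=
        mul_le_mul_of_nonneg_right hkey hξ2
      linarith [h1, hple, h2]
    linarith [hDxle]
end
end
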